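/- arXiv:2303.11248 — 5 statements merged into one kernel-verified Lean document; each statement's English description precedes it below -/
import Mathlib

section
/- Let φ be a rational inner function on the polydisk 𝔻^d and let α ∈ 𝕋. Then the support of the Clark measure σ_α is contained in the unimodular level set C_α(φ). -/
open MeasureTheory Complex Filter Topology

noncomputable section

/-- The open unit polydisk `𝔻^d` in `ℂ^d`. -/
def polyDisk (d : ℕ) : Set (Fin d → ℂ) := {z | ∀ j, ‖z j‖ < 1}

/-- The distinguished boundary `𝕋^d` of the polydisk. -/
def polyTorus (d : ℕ) : Set (Fin d → ℂ) := {z | ∀ j, ‖z j‖ = 1}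

/-- The product Poisson kernel `P_z(ζ) = ∏_j (1-|z_j|²)/|ζ_j - z_j|²`. -/
def poissonD (d : ℕ) (z ζ : Fin d → ℂ) : ℝ :=
  ∏ j, (1 - ‖z j‖ ^ 2) / ‖ζ j - z j‖ ^ 2

/-- `φ` has radial limit `L` at `ζ`:  `φ(rζ) → L` as `r → 1⁻`. -/
def HasRadialLimit (d : ℕ) (φ : (Fin d → ℂ) → ℂ) (ζ : Fin d → ℂ) (L : ℂ) : Prop :=
  Tendsto (fun r : ℝ => φ (fun j => (r : ℂ) * ζ j)) (𝓝[<] (1 : ℝ)) (𝓝 L)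

/-- Normalized Lebesgue measure on the d-torus, as a measure on `ℂ^d`. -/
def torusLebesgue (d : ℕ) : Measure (Fin d → ℂ) :=
  (ENNReal.ofReal ((2 * Real.pi) ^ d))⁻¹ •
    Measure.map (fun θ : Fin d → ℝ => fun j => Complex.exp ((θ j : ℂ) * Complex.I))
      (MeasureTheory.volume.restrict (Set.pi Set.univ fun _ => Set.Ico 0 (2 * Real.pi)))

/-- `φ = q/p` is a rational inner function on `𝔻^d`: `p, q` have no common factor,
`p` is zero-free on the polydisk, `φ` maps `𝔻^d` to `𝔻`, and the radial limits of `φ`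
are unimodular a.e. on `𝕋^d`. -/
structure IsRIFd (d : ℕ) (p q : MvPolynomial (Fin d) ℂ) : Prop where
  coprime : ∀ r : MvPolynomial (Fin d) ℂ, r ∣ p → r ∣ q → IsUnit r
  stable : ∀ z ∈ polyDisk d, MvPolynomial.eval z p ≠ 0
  mapsToDisk : ∀ z ∈ polyDisk d,
    ‖MvPolynomial.eval z q / MvPolynomial.eval z p‖ < 1
  inner : ∀ᵐ ζ ∂(torusLebesgue d),
    ∃ L : ℂ, ‖L‖ = 1 ∧
      HasRadialLimit d (fun z => MvPolynomial.eval z q / MvPolynomial.eval z p) ζ L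

/-- `σ` is the Clark measure of `φ` at parameter `α`: a positive Borel measure on `𝕋^d`
whose Poisson integral is `(1-|φ(z)|²)/|α-φ(z)|²`. -/
def IsClarkMeasureD (d : ℕ) (φ : (Fin d → ℂ) → ℂ) (α : ℂ) (σ : Measure (Fin d → ℂ)) : Prop :=
  σ (polyTorus d)ᶜ = 0 ∧
  ∀ z ∈ polyDisk d,
    ∫⁻ ζ, ENNReal.ofReal (poissonD d z ζ) ∂σ =
      ENNReal.ofReal ((1 - ‖φ z‖ ^ 2) / ‖α - φ z‖ ^ 2)

/-- The unimodular level set `C_α(φ)`. -/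
def levelSetD (d : ℕ) (φ : (Fin d → ℂ) → ℂ) (α : ℂ) : Set (Fin d → ℂ) :=
  closure {ζ | ζ ∈ polyTorus d ∧ HasRadialLimit d φ ζ α}

/-- The topological support of a measure: points all of whose open neighborhoods
have positive measure. -/
def measureSupport {X : Type*} [TopologicalSpace X] [MeasurableSpace X]
    (μ : Measure X) : Set X :=
  {x | ∀ U : Set X, IsOpen U → x ∈ U → 0 < μ U}

/-!
Suppose `ζ₀` lies in the support of `σ_α` but not in `C_α(φ)`, and let `B` be a ball about `ζ₀`
missing `C_α(φ)`. Each slice `λ ↦ φ(λζ)` is a bounded one-variable rational function, so `φ` has a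
radial limit `L(ζ)` at every `ζ ∈ 𝕋^d`, and `L(ζ) ≠ α` on `B`. Testing the Clark identity at
`z = (1-t)ζ` against the Poisson kernel, which is at least `(4t)^(-d)` on the ball of radius `t`
about `ζ`, gives `σ_α(B(ζ,t)) ≤ (4t)^d (1-|φ(z)|²)/|α-φ(z)|²`, while `m(B(ζ,t)) ≥ (t/2π)^d`.
The Vitali covering lemma then yields `σ_α(A) ≤ (32π)^d ε m(A)` on every set `A` where this ratio
is eventually `≤ ε` along the radii. The ratio tends to `0` where `|L| = 1`, and stays bounded
where `|L| < 1`, an `m`-null set since `φ` is inner. Hence `σ_α(B) = 0`, contradicting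
`ζ₀ ∈ supp σ_α`.
-/

open Metric Set

lemma isClosed_polyTorus (d : ℕ) : IsClosed (polyTorus d) := by
  simp only [polyTorus, ofPred_forall]
  exact isClosed_iInter fun j => isClosed_eq (continuous_apply j).norm continuous_const

lemma ofReal_smul_mem_polyDisk {d : ℕ} {ζ : Fin d → ℂ} (hζ : ζ ∈ polyTorus d) {r : ℝ}
    (h0 : 0 ≤ r) (h1 : r < 1) : (r : ℂ) • ζ ∈ polyDisk d := fun j => by
  simpa [hζ j, abs_of_nonneg h0] using h1

lemma tendsto_ofReal_nhdsLT_one : Tendsto (fun r : ℝ => (r : ℂ)) (𝓝[<] 1) (𝓝[≠] 1) :=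
  tendsto_nhdsWithin_iff.2 ⟨(continuous_ofReal.tendsto' 1 1 ofReal_one).mono_left
    nhdsWithin_le_nhds, eventually_nhdsWithin_of_forall fun r hr => by
      simpa using hr.ne⟩

lemma MeromorphicAt.exists_tendsto_of_eventually_norm_le {𝕜 E ι : Type*}
    [NontriviallyNormedField 𝕜] [NormedAddCommGroup E] [NormedSpace 𝕜 E] {f : 𝕜 → E} {x : 𝕜}
    (hf : MeromorphicAt f x) {l : Filter ι} [l.NeBot] {g : ι → 𝕜} (hg : Tendsto g l (𝓝[≠] x))
    {C : ℝ} (hC : ∀ᶠ i in l, ‖f (g i)‖ ≤ C) : ∃ c, Tendsto (f ∘ g) l (𝓝 c) := by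
  rcases lt_or_ge (meromorphicOrderAt f x) 0 with ho | ho
  · have hinf := tendsto_norm_atTop_iff_cobounded.2
      ((tendsto_cobounded_of_meromorphicOrderAt_neg ho).comp hg)
    obtain ⟨i, hi, hiC⟩ := (hinf.eventually_gt_atTop C |>.and hC).exists
    exact absurd hi hiC.not_gt
  · obtain ⟨c, hc⟩ := tendsto_nhds_of_meromorphicOrderAt_nonneg hf ho
    exact ⟨c, hc.comp hg⟩

lemma exists_hasRadialLimit {d : ℕ} {p q : MvPolynomial (Fin d) ℂ} {C : ℝ}
    (hC : ∀ z ∈ polyDisk d, ‖MvPolynomial.eval z q / MvPolynomial.eval z p‖ ≤ C)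
    {ζ : Fin d → ℂ} (hζ : ζ ∈ polyTorus d) :
    ∃ L, HasRadialLimit d (fun z => MvPolynomial.eval z q / MvPolynomial.eval z p) ζ L := by
  have hslice : ∀ s : MvPolynomial (Fin d) ℂ,
      AnalyticAt ℂ (fun w : ℂ => MvPolynomial.eval (w • ζ) s) 1 := fun s =>
    (AnalyticOnNhd.eval_mvPolynomial s _ (mem_univ _)).comp
      (analyticAt_id.smul analyticAt_const)
  have hmero : MeromorphicAt
      (fun w : ℂ => MvPolynomial.eval (w • ζ) q / MvPolynomial.eval (w • ζ) p) 1 :=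
    (hslice q).meromorphicAt.div (hslice p).meromorphicAt
  refine hmero.exists_tendsto_of_eventually_norm_le tendsto_ofReal_nhdsLT_one (C := C) ?_
  filter_upwards [Ioo_mem_nhdsLT zero_lt_one] with r hr
  exact hC _ (ofReal_smul_mem_polyDisk hζ hr.1.le hr.2)

lemma inv_four_mul_le_poisson_factor {u w : ℂ} (hu : ‖u‖ = 1) (hw : ‖w‖ = 1) {t : ℝ}
    (ht0 : 0 < t) (ht1 : t ≤ 1) (hwu : ‖w - u‖ ≤ t) :
    (4 * t)⁻¹ ≤ (1 - ‖((1 - t : ℝ) : ℂ) * u‖ ^ 2) / ‖w - ((1 - t : ℝ) : ℂ) * u‖ ^ 2 := by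
  have hnorm : ‖((1 - t : ℝ) : ℂ) * u‖ = 1 - t := by
    rw [norm_mul, hu, mul_one, norm_real, Real.norm_of_nonneg (by linarith)]
  have hlow : t ≤ ‖w - ((1 - t : ℝ) : ℂ) * u‖ := by
    have := norm_sub_norm_le w (((1 - t : ℝ) : ℂ) * u)
    rw [hw, hnorm] at this
    linarith
  have hup : ‖w - ((1 - t : ℝ) : ℂ) * u‖ ≤ 2 * t := by
    have hsplit : w - ((1 - t : ℝ) : ℂ) * u = (w - u) + (t : ℂ) * u := by push_cast; ring
    calc ‖w - ((1 - t : ℝ) : ℂ) * u‖ ≤ ‖w - u‖ + ‖(t : ℂ) * u‖ := hsplit ▸ norm_add_le _ _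
      _ ≤ 2 * t := by rw [norm_mul, hu, mul_one, norm_real, Real.norm_of_nonneg ht0.le]; linarith
  rw [hnorm, le_div_iff₀ (by nlinarith)]
  calc (4 * t)⁻¹ * ‖w - ((1 - t : ℝ) : ℂ) * u‖ ^ 2 ≤ (4 * t)⁻¹ * (2 * t) ^ 2 := by gcongr
    _ = t := by field_simp; ring
    _ ≤ 1 - (1 - t) ^ 2 := by nlinarith

lemma inv_le_poissonD {d : ℕ} {ζ ζ' : Fin d → ℂ} (hζ : ζ ∈ polyTorus d)
    (hζ' : ζ' ∈ polyTorus d) {t : ℝ} (ht0 : 0 < t) (ht1 : t ≤ 1) (hdist : dist ζ' ζ ≤ t) :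
    ((4 * t) ^ d)⁻¹ ≤ poissonD d (((1 - t : ℝ) : ℂ) • ζ) ζ' := by
  rw [← inv_pow, ← Fin.prod_const]
  refine Finset.prod_le_prod (fun _ _ => by positivity) fun j _ => ?_
  refine inv_four_mul_le_poisson_factor (hζ j) (hζ' j) ht0 ht1 ?_
  simpa [dist_eq_norm] using (dist_le_pi_dist ζ' ζ j).trans hdist

/-- The value at `z` of the Poisson integral of the Clark measure `σ_α` of `φ`, with `w = φ z`. -/
def clarkRatio (α w : ℂ) : ℝ := (1 - ‖w‖ ^ 2) / ‖α - w‖ ^ 2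

lemma continuousAt_clarkRatio {α w : ℂ} (hw : w ≠ α) : ContinuousAt (clarkRatio α) w :=
  (continuousAt_const.sub (continuous_norm.continuousAt.pow 2)).div
    ((continuousAt_const.sub continuousAt_id).norm.pow 2)
    (pow_ne_zero 2 (norm_ne_zero_iff.2 (sub_ne_zero.2 hw.symm)))

lemma clarkRatio_eq_zero_of_norm_eq_one (α : ℂ) {w : ℂ} (hw : ‖w‖ = 1) : clarkRatio α w = 0 := by
  simp [clarkRatio, hw]

lemma IsClarkMeasureD.measure_closedBall_le {d : ℕ} {φ : (Fin d → ℂ) → ℂ} {α : ℂ}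
    {σ : Measure (Fin d → ℂ)} (hσ : IsClarkMeasureD d φ α σ) {ζ : Fin d → ℂ}
    (hζ : ζ ∈ polyTorus d) {t : ℝ} (ht0 : 0 < t) (ht1 : t ≤ 1) :
    σ (closedBall ζ t) ≤
      ENNReal.ofReal ((4 * t) ^ d * clarkRatio α (φ (((1 - t : ℝ) : ℂ) • ζ))) := by
  set z : Fin d → ℂ := ((1 - t : ℝ) : ℂ) • ζ
  have hz : z ∈ polyDisk d := ofReal_smul_mem_polyDisk hζ (by linarith) (by linarith)
  have hs : MeasurableSet (closedBall ζ t ∩ polyTorus d) :=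
    isClosed_closedBall.measurableSet.inter (isClosed_polyTorus d).measurableSet
  have hc : 0 ≤ (4 * t) ^ d := by positivity
  rw [← measure_inter_conull hσ.1, ENNReal.ofReal_mul hc, clarkRatio, ← hσ.2 z hz]
  calc σ (closedBall ζ t ∩ polyTorus d)
      = ∫⁻ _ in closedBall ζ t ∩ polyTorus d,
          ENNReal.ofReal ((4 * t) ^ d * ((4 * t) ^ d)⁻¹) ∂σ := by
        rw [mul_inv_cancel₀ (by positivity), ENNReal.ofReal_one, setLIntegral_one]
    _ ≤ ∫⁻ ζ' in closedBall ζ t ∩ polyTorus d,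
          ENNReal.ofReal ((4 * t) ^ d) * ENNReal.ofReal (poissonD d z ζ') ∂σ :=
        setLIntegral_mono' hs fun ζ' hζ' => by
          rw [← ENNReal.ofReal_mul hc]
          exact ENNReal.ofReal_le_ofReal (mul_le_mul_of_nonneg_left
            (inv_le_poissonD hζ hζ'.2 ht0 ht1 (mem_closedBall.1 hζ'.1)) hc)
    _ ≤ ENNReal.ofReal ((4 * t) ^ d) * ∫⁻ ζ', ENNReal.ofReal (poissonD d z ζ') ∂σ := by
        rw [lintegral_const_mul' _ _ ENNReal.ofReal_ne_top]
        exact mul_le_mul_right (setLIntegral_le_lintegral _ _) _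

lemma continuous_pi_exp_ofReal_mul_I (d : ℕ) :
    Continuous (fun θ : Fin d → ℝ => fun j => Complex.exp ((θ j : ℂ) * Complex.I)) := by
  fun_prop

instance (d : ℕ) : IsFiniteMeasure (torusLebesgue d) := by
  have : IsFiniteMeasure (volume.restrict (Set.pi univ fun _ : Fin d => Ico 0 (2 * Real.pi))) :=
    isFiniteMeasure_restrict.2 (by simp [Real.volume_pi_Ico, ENNReal.mul_eq_top])
  refine ⟨?_⟩
  rw [torusLebesgue, Measure.smul_apply, smul_eq_mul]
  exact ENNReal.mul_lt_top (ENNReal.inv_lt_top.2 (by positivity)) (measure_lt_top _ _)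

lemma exists_Ico_subset_of_norm_eq_one {u : ℂ} (hu : ‖u‖ = 1) {t : ℝ} (ht0 : 0 ≤ t)
    (ht : t ≤ 2 * Real.pi) :
    ∃ a, Ico a (a + t) ⊆ Ico 0 (2 * Real.pi) ∧
      ∀ θ ∈ Ico a (a + t), ‖Complex.exp ((θ : ℂ) * Complex.I) - u‖ ≤ t := by
  set θ₀ := toIcoMod Real.two_pi_pos 0 (arg u)
  have hθ₀ : θ₀ ∈ Ico 0 (2 * Real.pi) := by
    simpa using toIcoMod_mem_Ico Real.two_pi_pos 0 (arg u)
  have hexp : Complex.exp ((θ₀ : ℂ) * Complex.I) = u := by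
    have harg : Complex.exp (arg u * Complex.I) = u := by
      simpa [hu] using norm_mul_exp_arg_mul_I u
    rw [← harg, exp_eq_exp_iff_exists_int]
    refine ⟨-toIcoDiv Real.two_pi_pos 0 (arg u), ?_⟩
    simp only [θ₀, ← self_sub_toIcoDiv_zsmul, zsmul_eq_mul]
    push_cast
    ring
  have hmin : θ₀ - t ≤ min θ₀ (2 * Real.pi - t) := le_min (by linarith) (by linarith [hθ₀.2])
  refine ⟨min θ₀ (2 * Real.pi - t), fun θ hθ => ⟨?_, ?_⟩, fun θ hθ => ?_⟩
  · exact le_trans (le_min hθ₀.1 (by linarith)) hθ.1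
  · linarith [hθ.2, min_le_right θ₀ (2 * Real.pi - t)]
  · have hsplit : Complex.exp ((θ : ℂ) * Complex.I) - u =
        u * (Complex.exp (Complex.I * ((θ - θ₀ : ℝ) : ℂ)) - 1) := by
      rw [← hexp, mul_sub, mul_one, ← Complex.exp_add]
      push_cast
      ring_nf
    rw [hsplit, norm_mul, hu, one_mul]
    refine Real.norm_exp_I_mul_ofReal_sub_one_le.trans ?_
    rw [Real.norm_eq_abs, abs_le]
    constructor <;> linarith [hθ.1, hθ.2, min_le_left θ₀ (2 * Real.pi - t)]

lemma ofReal_le_torusLebesgue_closedBall {d : ℕ} {ζ : Fin d → ℂ} (hζ : ζ ∈ polyTorus d)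
    {t : ℝ} (ht0 : 0 ≤ t) (ht : t ≤ 2 * Real.pi) :
    ENNReal.ofReal ((t / (2 * Real.pi)) ^ d) ≤ torusLebesgue d (closedBall ζ t) := by
  choose a ha hclose using fun j => exists_Ico_subset_of_norm_eq_one (hζ j) ht0 ht
  have hbox : Set.pi univ (fun j => Ico (a j) (a j + t)) ⊆
      (fun θ : Fin d → ℝ => fun j => Complex.exp ((θ j : ℂ) * Complex.I)) ⁻¹' closedBall ζ t ∩
        Set.pi univ fun _ => Ico 0 (2 * Real.pi) := fun θ hθ =>
    ⟨(dist_pi_le_iff ht0).2 fun j => by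
      rw [dist_eq_norm]; exact hclose j _ (hθ j trivial), fun j _ => ha j (hθ j trivial)⟩
  have hmeas : MeasurableSet (closedBall ζ t) := isClosed_closedBall.measurableSet
  have hexp := (continuous_pi_exp_ofReal_mul_I d).measurable
  rw [torusLebesgue, Measure.smul_apply, Measure.map_apply hexp hmeas,
    Measure.restrict_apply (hexp hmeas), smul_eq_mul]
  calc ENNReal.ofReal ((t / (2 * Real.pi)) ^ d)
      = (ENNReal.ofReal ((2 * Real.pi) ^ d))⁻¹ *
          volume (Set.pi univ fun j => Ico (a j) (a j + t)) := by
        rw [Real.volume_pi_Ico]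
        simp only [add_sub_cancel_left, Finset.prod_const, Finset.card_univ, Fintype.card_fin]
        rw [div_pow, ENNReal.ofReal_div_of_pos (by positivity), ENNReal.div_eq_inv_mul,
          ENNReal.ofReal_pow ht0]
    _ ≤ _ := by gcongr

section VitaliCovering

variable {X : Type*} [PseudoMetricSpace X] [TopologicalSpace.SeparableSpace X] [MeasurableSpace X]
  [OpensMeasurableSpace X] {σ ν : Measure X} {A : Set X}

lemma measure_le_of_eventually_closedBall_le_of_isOpen {U : Set X} (hU : IsOpen U) (hAU : A ⊆ U)
    (h : ∀ x ∈ A, ∀ᶠ t in 𝓝[>] 0, σ (closedBall x (4 * t)) ≤ ν (closedBall x t)) :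
    σ A ≤ ν U := by
  have hr : ∀ x ∈ A, ∃ r, 0 < r ∧ r ≤ 1 ∧ closedBall x r ⊆ U ∧
      σ (closedBall x (4 * r)) ≤ ν (closedBall x r) := by
    intro x hx
    obtain ⟨ε, hε, hball⟩ := Metric.isOpen_iff.1 hU x (hAU hx)
    obtain ⟨r, hrσ, hr⟩ := ((h x hx).and (Ioo_mem_nhdsGT (lt_min hε one_pos))).exists
    exact ⟨r, hr.1, hr.2.le.trans (min_le_right _ _),
      (closedBall_subset_ball (hr.2.trans_le (min_le_left _ _))).trans hball, hrσ⟩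
  choose! r hr0 hr1 hrU hrσ using hr
  obtain ⟨u, huA, hdisj, hcover⟩ :=
    Vitali.exists_disjoint_subfamily_covering_enlargement_closedBall A id r 1 hr1 4 (by norm_num)
  have hu : u.Countable := hdisj.countable_of_nonempty_interior fun x hx =>
    ⟨x, mem_interior.2 ⟨ball x (r x), ball_subset_closedBall, isOpen_ball,
      mem_ball_self (hr0 x (huA hx))⟩⟩
  calc σ A ≤ σ (⋃ x ∈ u, closedBall x (4 * r x)) := measure_mono fun y hy => by
          obtain ⟨x, hx, hsub⟩ := hcover y hy
          exact mem_biUnion hx (hsub (mem_closedBall_self (hr0 y hy).le))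
    _ ≤ ∑' x : u, σ (closedBall x (4 * r x)) := measure_biUnion_le _ hu _
    _ ≤ ∑' x : u, ν (closedBall x (r x)) := ENNReal.tsum_le_tsum fun x => hrσ x (huA x.2)
    _ = ν (⋃ x ∈ u, closedBall x (r x)) :=
        (measure_biUnion hu hdisj fun _ _ => measurableSet_closedBall).symm
    _ ≤ ν U := measure_mono (iUnion₂_subset fun x hx => hrU x (huA hx))

lemma measure_le_of_eventually_closedBall_le [Measure.OuterRegular ν]
    (h : ∀ x ∈ A, ∀ᶠ t in 𝓝[>] 0, σ (closedBall x (4 * t)) ≤ ν (closedBall x t)) :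
    σ A ≤ ν A := by
  rw [A.measure_eq_iInf_isOpen ν]
  exact le_iInf₂ fun U hAU => le_iInf fun hU =>
    measure_le_of_eventually_closedBall_le_of_isOpen hU hAU h

end VitaliCovering

lemma tendsto_one_sub_four_mul_nhdsGT_zero :
    Tendsto (fun t : ℝ => 1 - 4 * t) (𝓝[>] 0) (𝓝[<] 1) :=
  tendsto_nhdsWithin_iff.2 ⟨((continuous_const.sub (continuous_const.mul continuous_id)).tendsto'
    0 1 (by norm_num)).mono_left nhdsWithin_le_nhds,
    eventually_nhdsWithin_of_forall fun t ht => by simp only [mem_Iio]; linarith [mem_Ioi.1 ht]⟩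

lemma IsClarkMeasureD.measure_le_mul_torusLebesgue {d : ℕ} {φ : (Fin d → ℂ) → ℂ} {α : ℂ}
    {σ : Measure (Fin d → ℂ)} (hσ : IsClarkMeasureD d φ α σ) {A : Set (Fin d → ℂ)}
    (hA : A ⊆ polyTorus d) {ε : ℝ}
    (hε : ∀ ζ ∈ A, ∀ᶠ r : ℝ in 𝓝[<] 1, clarkRatio α (φ ((r : ℂ) • ζ)) ≤ ε) :
    σ A ≤ ENNReal.ofReal ((32 * Real.pi) ^ d * ε) * torusLebesgue d A := by
  set K := ((32 * Real.pi) ^ d * ε).toNNReal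
  refine measure_le_of_eventually_closedBall_le (ν := K • torusLebesgue d) fun ζ hζ => ?_
  filter_upwards [tendsto_one_sub_four_mul_nhdsGT_zero.eventually (hε ζ hζ),
    Ioc_mem_nhdsGT (by norm_num : (0 : ℝ) < 1 / 4)] with t hle ht
  have hvol : 0 ≤ (t / (2 * Real.pi)) ^ d := pow_nonneg (div_nonneg ht.1.le (by positivity)) d
  have hpow : (4 * (4 * t)) ^ d = (32 * Real.pi) ^ d * (t / (2 * Real.pi)) ^ d := by
    rw [← mul_pow]
    congr 1
    field_simp
    ring
  calc σ (closedBall ζ (4 * t))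
      ≤ ENNReal.ofReal ((4 * (4 * t)) ^ d * clarkRatio α (φ (((1 - 4 * t : ℝ) : ℂ) • ζ))) :=
        hσ.measure_closedBall_le (hA hζ) (by linarith [ht.1]) (by linarith [ht.2])
    _ ≤ ENNReal.ofReal ((32 * Real.pi) ^ d * ε * (t / (2 * Real.pi)) ^ d) := by
        refine ENNReal.ofReal_le_ofReal ?_
        rw [hpow, mul_right_comm _ ε]
        exact mul_le_mul_of_nonneg_left hle (mul_nonneg (by positivity) hvol)
    _ = K * ENNReal.ofReal ((t / (2 * Real.pi)) ^ d) := ENNReal.ofReal_mul' hvol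
    _ ≤ K * torusLebesgue d (closedBall ζ t) := by
        gcongr
        exact ofReal_le_torusLebesgue_closedBall (hA hζ) ht.1.le
          (by linarith [ht.2, Real.pi_gt_three])
    _ = (K • torusLebesgue d) (closedBall ζ t) := rfl

lemma IsClarkMeasureD.measure_eq_zero_of_tendsto_zero {d : ℕ} {φ : (Fin d → ℂ) → ℂ} {α : ℂ}
    {σ : Measure (Fin d → ℂ)} (hσ : IsClarkMeasureD d φ α σ) {A : Set (Fin d → ℂ)}
    (hA : A ⊆ polyTorus d)
    (h : ∀ ζ ∈ A, Tendsto (fun r : ℝ => clarkRatio α (φ ((r : ℂ) • ζ))) (𝓝[<] 1) (𝓝 0)) :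
    σ A = 0 := by
  have hbound : ∀ ε > 0,
      σ A ≤ ENNReal.ofReal ((32 * Real.pi) ^ d * ε) * torusLebesgue d univ := fun ε hε =>
    (hσ.measure_le_mul_torusLebesgue hA fun ζ hζ =>
      (h ζ hζ).eventually (eventually_le_nhds hε)).trans (by gcongr; exact subset_univ A)
  have hlim : Tendsto (fun ε => ENNReal.ofReal ((32 * Real.pi) ^ d * ε) * torusLebesgue d univ)
      (𝓝[>] 0) (𝓝 0) := by
    have := ENNReal.Tendsto.mul_const
      (ENNReal.tendsto_ofReal ((continuous_const_mul ((32 * Real.pi) ^ d)).tendsto 0))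
      (Or.inr (measure_ne_top (torusLebesgue d) univ))
    simpa using this.mono_left nhdsWithin_le_nhds
  exact nonpos_iff_eq_zero.1 (ge_of_tendsto hlim (eventually_nhdsWithin_of_forall hbound))

lemma IsClarkMeasureD.measure_eq_zero_of_torusLebesgue_eq_zero {d : ℕ} {φ : (Fin d → ℂ) → ℂ}
    {α : ℂ} {σ : Measure (Fin d → ℂ)} (hσ : IsClarkMeasureD d φ α σ) {A : Set (Fin d → ℂ)}
    (hA : A ⊆ polyTorus d) (hA0 : torusLebesgue d A = 0) {C : ℝ}
    (h : ∀ ζ ∈ A, ∀ᶠ r : ℝ in 𝓝[<] 1, clarkRatio α (φ ((r : ℂ) • ζ)) ≤ C) :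
    σ A = 0 := by
  refine nonpos_iff_eq_zero.1 ((hσ.measure_le_mul_torusLebesgue hA h).trans ?_)
  rw [hA0, mul_zero]

lemma IsRIFd.torusLebesgue_norm_radialLimit_ne_one {d : ℕ} {p q : MvPolynomial (Fin d) ℂ}
    (hRIF : IsRIFd d p q) {L : (Fin d → ℂ) → ℂ}
    (hL : ∀ ζ ∈ polyTorus d,
      HasRadialLimit d (fun z => MvPolynomial.eval z q / MvPolynomial.eval z p) ζ (L ζ)) :
    torusLebesgue d {ζ ∈ polyTorus d | ‖L ζ‖ ≠ 1} = 0 := by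
  refine measure_mono_null (fun ζ hζ => ?_) (ae_iff.1 hRIF.inner)
  rintro ⟨L', hL'1, hL'⟩
  exact hζ.2 (tendsto_nhds_unique hL' (hL ζ hζ.1) ▸ hL'1)

theorem support_clark_subset_levelSet_general
    (d : ℕ) (p q : MvPolynomial (Fin d) ℂ)
    (hRIF : IsRIFd d p q) (α : ℂ)
    (σ : Measure (Fin d → ℂ))
    (hσ : IsClarkMeasureD d (fun z => MvPolynomial.eval z q / MvPolynomial.eval z p) α σ) :
    measureSupport σ ⊆
      levelSetD d (fun z => MvPolynomial.eval z q / MvPolynomial.eval z p) α := by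
  set φ := fun z => MvPolynomial.eval z q / MvPolynomial.eval z p
  intro ζ₀ hζ₀
  by_contra hζ₀C
  obtain ⟨δ, hδ, hball⟩ := Metric.isOpen_iff.1 isClosed_closure.isOpen_compl ζ₀ hζ₀C
  set T := ball ζ₀ δ ∩ polyTorus d
  choose! L hL using fun ζ (hζ : ζ ∈ polyTorus d) =>
    exists_hasRadialLimit (fun z hz => (hRIF.mapsToDisk z hz).le) hζ
  have hlim : ∀ ζ ∈ T, Tendsto (fun r : ℝ => clarkRatio α (φ ((r : ℂ) • ζ))) (𝓝[<] 1)
      (𝓝 (clarkRatio α (L ζ))) := fun ζ hζ =>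
    (continuousAt_clarkRatio fun h => hball hζ.1
      (subset_closure ⟨hζ.2, by rw [← h]; exact hL ζ hζ.2⟩)).tendsto.comp (hL ζ hζ.2)
  have hG : σ {ζ ∈ T | ‖L ζ‖ = 1} = 0 :=
    hσ.measure_eq_zero_of_tendsto_zero (fun ζ hζ => hζ.1.2) fun ζ hζ => by
      simpa [clarkRatio_eq_zero_of_norm_eq_one α hζ.2] using hlim ζ hζ.1
  have hN : ∀ n : ℕ, σ {ζ ∈ T | ‖L ζ‖ ≠ 1 ∧ clarkRatio α (L ζ) < n} = 0 := fun n =>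
    hσ.measure_eq_zero_of_torusLebesgue_eq_zero (fun ζ hζ => hζ.1.2)
      (measure_mono_null (fun ζ hζ => show ζ ∈ {ζ ∈ polyTorus d | ‖L ζ‖ ≠ 1} from
        ⟨hζ.1.2, hζ.2.1⟩) (hRIF.torusLebesgue_norm_radialLimit_ne_one hL))
      fun ζ hζ => (hlim ζ hζ.1).eventually (eventually_le_nhds hζ.2.2)
  have hT : σ T = 0 := by
    refine measure_mono_null (fun ζ hζ => ?_) (measure_union_null hG (measure_iUnion_null hN))
    by_cases h : ‖L ζ‖ = 1
    · exact Or.inl ⟨hζ, h⟩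
    · obtain ⟨n, hn⟩ := exists_nat_gt (clarkRatio α (L ζ))
      exact Or.inr (mem_iUnion.2 ⟨n, hζ, h, hn⟩)
  have hpos := hζ₀ (ball ζ₀ δ) isOpen_ball (mem_ball_self hδ)
  rw [← measure_inter_conull hσ.1, hT] at hpos
  exact hpos.false

/-- Let `φ` be a rational inner function on the polydisk `𝔻^d` and let
`α ∈ 𝕋`. Then the support of the Clark measure `σ_α` is contained in the unimodular
level set `C_α(φ)`. -/
theorem support_clark_subset_levelSet
    (d : ℕ) (hd : 0 < d) (p q : MvPolynomial (Fin d) ℂ)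
    (hRIF : IsRIFd d p q) (α : ℂ) (hα : ‖α‖ = 1)
    (σ : Measure (Fin d → ℂ))
    (hσ : IsClarkMeasureD d (fun z => MvPolynomial.eval z q / MvPolynomial.eval z p) α σ) :
    measureSupport σ ⊆
      levelSetD d (fun z => MvPolynomial.eval z q / MvPolynomial.eval z p) α :=
  support_clark_subset_levelSet_general d p q hRIF α σ hσ
end
end

section
/- Let μ be a positive Borel measure on 𝕋^d with total mass 1 which is pluriharmonic, i.e. its Poisson integral z ↦ ∫_{𝕋^d} P_z(ζ) dμ(ζ) is the real part of a holomorphic function on 𝔻^d. Then there exists a holomorphic function φ_μ : 𝔻^d → 𝔻 such that (1−|φ_μ(z)|²)/|1−φ_μ(z)|² = ∫_{𝕋^d} P_z(ζ) dμ(ζ) for all z ∈ 𝔻^d; that is, μ is the Aleksandrov–Clark measure of φ_μ for the parameter value α = 1. -/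
open MeasureTheory Complex Filter Topology

noncomputable section

/-! On the torus `|ζ_j - z_j| ≤ 2`, so the Poisson kernel `P_z` is bounded below by the positive
constant `∏_j (1 - |z_j|²)/4`; hence the Poisson integral of `μ`, which is `Re H`, is positive on
`𝔻^d`. The Cayley transform `φ = (H - 1)/(H + 1)` then maps `𝔻^d` into `𝔻`, and
`1 - |φ|² = 4 Re H / |H + 1|²`, `|1 - φ|² = 4 / |H + 1|²` give the Clark identity. -/

namespace Complex

lemma norm_add_one_sq_sub_norm_sub_one_sq (w : ℂ) : ‖w + 1‖ ^ 2 - ‖w - 1‖ ^ 2 = 4 * w.re := by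
  simp only [Complex.sq_norm, normSq_apply, add_re, sub_re, add_im, sub_im, one_re, one_im]
  ring

lemma add_one_ne_zero_of_re_pos {w : ℂ} (hw : 0 < w.re) : w + 1 ≠ 0 := by
  intro h
  have := congrArg re h
  simp only [add_re, one_re, zero_re] at this
  linarith

lemma norm_sub_one_div_add_one_lt_one {w : ℂ} (hw : 0 < w.re) : ‖(w - 1) / (w + 1)‖ < 1 := by
  rw [norm_div, div_lt_one (norm_pos_iff.mpr (add_one_ne_zero_of_re_pos hw))]
  have := norm_add_one_sq_sub_norm_sub_one_sq w
  nlinarith [norm_nonneg (w - 1), norm_nonneg (w + 1)]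

lemma one_sub_norm_sq_div_norm_one_sub_sq_of_sub_one_div_add_one {w : ℂ} (hw : w + 1 ≠ 0) :
    (1 - ‖(w - 1) / (w + 1)‖ ^ 2) / ‖1 - (w - 1) / (w + 1)‖ ^ 2 = w.re := by
  have hw' : 0 < ‖w + 1‖ := norm_pos_iff.mpr hw
  have one_sub : 1 - (w - 1) / (w + 1) = 2 / (w + 1) := by
    field_simp
    ring
  have hdiff := norm_add_one_sq_sub_norm_sub_one_sq w
  rw [one_sub, norm_div, norm_div, div_pow, div_pow, Complex.norm_two]
  field_simp
  linarith

end Complex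

section PoissonKernel

lemma one_sub_sq_norm_pos {z : ℂ} (hz : ‖z‖ < 1) : 0 < 1 - ‖z‖ ^ 2 := by
  nlinarith [norm_nonneg z]

lemma poisson_factor_ge {z ζ : ℂ} (hz : ‖z‖ < 1) (hζ : ‖ζ‖ = 1) :
    (1 - ‖z‖ ^ 2) / 4 ≤ (1 - ‖z‖ ^ 2) / ‖ζ - z‖ ^ 2 := by
  have hlow : 1 - ‖z‖ ≤ ‖ζ - z‖ := hζ ▸ norm_sub_norm_le ζ z
  have hhigh : ‖ζ - z‖ ≤ 2 := by linarith [norm_sub_le ζ z]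
  apply div_le_div_of_nonneg_left (one_sub_sq_norm_pos hz).le (by nlinarith)
  nlinarith

lemma poisson_factor_le {z ζ : ℂ} (hz : ‖z‖ < 1) (hζ : ‖ζ‖ = 1) :
    (1 - ‖z‖ ^ 2) / ‖ζ - z‖ ^ 2 ≤ (1 - ‖z‖ ^ 2) / (1 - ‖z‖) ^ 2 := by
  have hlow : 1 - ‖z‖ ≤ ‖ζ - z‖ := hζ ▸ norm_sub_norm_le ζ z
  apply div_le_div_of_nonneg_left (one_sub_sq_norm_pos hz).le (by nlinarith)
  nlinarith

variable {d : ℕ} {z ζ : Fin d → ℂ}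

lemma measurable_poissonD (z : Fin d → ℂ) : Measurable (poissonD d z) :=
  Finset.measurable_prod _ fun j _ =>
    measurable_const.div (((measurable_pi_apply j).sub measurable_const).norm.pow_const 2)

lemma prod_le_poissonD (hz : z ∈ polyDisk d) (hζ : ζ ∈ polyTorus d) :
    ∏ j, (1 - ‖z j‖ ^ 2) / 4 ≤ poissonD d z ζ :=
  Finset.prod_le_prod (fun j _ => div_nonneg (one_sub_sq_norm_pos (hz j)).le zero_le_four)
    fun j _ => poisson_factor_ge (hz j) (hζ j)

lemma poissonD_le_prod (hz : z ∈ polyDisk d) (hζ : ζ ∈ polyTorus d) :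
    poissonD d z ζ ≤ ∏ j, (1 - ‖z j‖ ^ 2) / (1 - ‖z j‖) ^ 2 :=
  Finset.prod_le_prod (fun j _ => div_nonneg (one_sub_sq_norm_pos (hz j)).le (sq_nonneg _))
    fun j _ => poisson_factor_le (hz j) (hζ j)

lemma integral_poissonD_pos {μ : Measure (Fin d → ℂ)} [IsFiniteMeasure μ] [NeZero μ]
    (hμ : μ (polyTorus d)ᶜ = 0) (hz : z ∈ polyDisk d) : 0 < ∫ ζ, poissonD d z ζ ∂μ := by
  have hae : ∀ᵐ ζ ∂μ, ζ ∈ polyTorus d := ae_iff.mpr hμ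
  set c := ∏ j, (1 - ‖z j‖ ^ 2) / 4
  have hc : 0 < c := Finset.prod_pos fun j _ => div_pos (one_sub_sq_norm_pos (hz j)) four_pos
  have hlower : ∀ᵐ ζ ∂μ, c ≤ poissonD d z ζ := hae.mono fun ζ hζ => prod_le_poissonD hz hζ
  have hint : Integrable (poissonD d z) μ := by
    refine .of_bound (measurable_poissonD z).aestronglyMeasurable
      (∏ j, (1 - ‖z j‖ ^ 2) / (1 - ‖z j‖) ^ 2) ?_
    filter_upwards [hae, hlower] with ζ hζ hcζ
    rw [Real.norm_of_nonneg (hc.le.trans hcζ)]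
    exact poissonD_le_prod hz hζ
  calc 0 < μ.real Set.univ • c := smul_pos measureReal_univ_pos hc
    _ = ∫ _, c ∂μ := (integral_const c).symm
    _ ≤ ∫ ζ, poissonD d z ζ ∂μ := integral_mono_ae (integrable_const c) hint hlower

end PoissonKernel

theorem pluriharmonic_measure_is_clark_general
    (d : ℕ) (μ : Measure (Fin d → ℂ)) [IsProbabilityMeasure μ]
    (hμtorus : μ (polyTorus d)ᶜ = 0)
    (H : (Fin d → ℂ) → ℂ)
    (hH : DifferentiableOn ℂ H (polyDisk d))
    (hHre : ∀ z ∈ polyDisk d, (H z).re = ∫ ζ, poissonD d z ζ ∂μ) :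
    ∃ φ : (Fin d → ℂ) → ℂ,
      DifferentiableOn ℂ φ (polyDisk d) ∧
      (∀ z ∈ polyDisk d, ‖φ z‖ < 1) ∧
      ∀ z ∈ polyDisk d,
        (1 - ‖φ z‖ ^ 2) / ‖1 - φ z‖ ^ 2 = ∫ ζ, poissonD d z ζ ∂μ := by
  have hre : ∀ z ∈ polyDisk d, 0 < (H z).re := fun z hz =>
    hHre z hz ▸ integral_poissonD_pos hμtorus hz
  have hne : ∀ z ∈ polyDisk d, H z + 1 ≠ 0 := fun z hz =>
    Complex.add_one_ne_zero_of_re_pos (hre z hz)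
  refine ⟨fun z => (H z - 1) / (H z + 1), ?_,
    fun z hz => Complex.norm_sub_one_div_add_one_lt_one (hre z hz), fun z hz => ?_⟩
  · simpa only [div_eq_mul_inv] using (hH.sub_const 1).fun_mul ((hH.add_const 1).fun_inv hne)
  rw [← hHre z hz]
  exact Complex.one_sub_norm_sq_div_norm_one_sub_sq_of_sub_one_div_add_one (hne z hz)

/-- Let `μ` be a positive Borel probability measure on `𝕋^d` which is
pluriharmonic, i.e. its Poisson integral is the real part of a function holomorphic on
`𝔻^d`. Then there is a holomorphic `φ_μ : 𝔻^d → 𝔻` such that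
`(1−|φ_μ(z)|²)/|1−φ_μ(z)|² = ∫ P_z dμ` on `𝔻^d`; that is, `μ` is the Aleksandrov–Clark
measure of `φ_μ` for the parameter `α = 1`. -/
theorem pluriharmonic_measure_is_clark
    (d : ℕ) (hd : 0 < d) (μ : Measure (Fin d → ℂ)) [IsProbabilityMeasure μ]
    (hμtorus : μ (polyTorus d)ᶜ = 0)
    (H : (Fin d → ℂ) → ℂ)
    (hH : DifferentiableOn ℂ H (polyDisk d))
    (hHre : ∀ z ∈ polyDisk d, (H z).re = ∫ ζ, poissonD d z ζ ∂μ) :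
    ∃ φ : (Fin d → ℂ) → ℂ,
      DifferentiableOn ℂ φ (polyDisk d) ∧
      (∀ z ∈ polyDisk d, ‖φ z‖ < 1) ∧
      ∀ z ∈ polyDisk d,
        (1 - ‖φ z‖ ^ 2) / ‖1 - φ z‖ ^ 2 = ∫ ζ, poissonD d z ζ ∂μ :=
  pluriharmonic_measure_is_clark_general d μ hμtorus H hH hHre
end
end

section
/- Let φ = p̃/p be a rational inner function on 𝔻^d of polydegree (n₁,…,n_d), i.e. p has degree n_j in the variable z_j. Fix ζ' = (ζ₁,…,ζ_{d−1}) ∈ 𝕋^{d−1} and suppose φ has no singularity of the form (ζ', τ) with τ ∈ 𝕋. Then the one-variable function φ_{ζ'}(z_d) = φ(ζ₁,…,ζ_{d−1}, z_d) is a finite Blaschke product of degree exactly n_d: there exist λ ∈ 𝕋 and points a₁,…,a_{n_d} ∈ 𝔻 such that φ_{ζ'}(z) = λ ∏_{k=1}^{n_d} (z − a_k)/(1 − conj(a_k) z). -/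
open MeasureTheory Complex Filter Topology

noncomputable section

/-- `pt` is the reflection `p̃(z) = z₁^{n₁}⋯z_d^{n_d} conj(p(1/conj z₁, …, 1/conj z_d))`
of `p` at polydegree `n`. -/
def IsReflectionD (d : ℕ) (n : Fin d → ℕ) (p pt : MvPolynomial (Fin d) ℂ) : Prop :=
  ∀ z : Fin d → ℂ, (∀ j, z j ≠ 0) →
    MvPolynomial.eval z pt =
      (∏ j, z j ^ n j) *
        (starRingEnd ℂ) (MvPolynomial.eval (fun j => ((starRingEnd ℂ) (z j))⁻¹) p)

/-!
Let `q(z) = p(ζ', z)`. For `r < 1` the slice `p(rζ', ·)` is zero-free on the disk, so its roots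
lie outside it, and comparing distances to the roots gives the Harnack-type bound
`((1 - |u|)/(1 + |v|))^{n_d} |p(rζ', v)| ≤ |p(rζ', u)|`, uniformly in `r`. Letting `r → 1`, the
polynomial `q`, which is not identically zero, has no zeros in the disk either. The reflection
identity `p̃(ζ', z) = c z^{n_d} conj(q(1/conj z))` with `|c| = 1` turns a zero of `q` on the circle
into a singularity, so every root `w` of `q` has `|w| > 1`. Writing `q = b ∏ (z - w)`, the reflection
is `c conj(b) z^{n_d - deg q} ∏ (1 - conj(w) z)`, and each quotient `(1 - conj(w) z)/(z - w)` is
a unimodular multiple of the Blaschke factor with zero `1/conj(w)`; the remaining `n_d - deg q`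
factors are `z` itself.
-/

open ComplexConjugate Polynomial

theorem norm_multiset_prod {α : Type*} [NormedField α] (s : Multiset α) :
    ‖s.prod‖ = (s.map (‖·‖)).prod :=
  map_multiset_prod (normHom : α →*₀ ℝ) s

theorem Multiset.exists_fin_prod_map_eq {α M : Type*} [CommMonoid M] (s : Multiset α) {N : ℕ}
    (hN : Multiset.card s = N) :
    ∃ a : Fin N → α, (∀ k, a k ∈ s) ∧ ∀ f : α → M, ∏ k, f (a k) = (s.map f).prod := by
  obtain ⟨l, rfl⟩ := Quot.exists_rep s
  subst hN
  exact ⟨fun k => l[k.1], fun k => List.getElem_mem _, fun f => Fin.prod_univ_fun_getElem l f⟩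

theorem mul_norm_sub_le_norm_sub {E : Type*} [SeminormedAddCommGroup E] {u w : E}
    (hu : ‖u‖ ≤ 1) (hw : 1 ≤ ‖w‖) (v : E) :
    (1 - ‖u‖) / (1 + ‖v‖) * ‖v - w‖ ≤ ‖u - w‖ := by
  have hv := norm_nonneg v
  have hvw : ‖v - w‖ ≤ (1 + ‖v‖) * ‖w‖ := by
    nlinarith [norm_sub_le v w]
  have huw : (1 - ‖u‖) * ‖w‖ ≤ ‖u - w‖ := by
    nlinarith [norm_sub_norm_le w u, norm_sub_rev u w, mul_nonneg (norm_nonneg u) (sub_nonneg.2 hw)]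
  calc (1 - ‖u‖) / (1 + ‖v‖) * ‖v - w‖
      ≤ (1 - ‖u‖) / (1 + ‖v‖) * ((1 + ‖v‖) * ‖w‖) := by gcongr
    _ = (1 - ‖u‖) * ‖w‖ := by field_simp
    _ ≤ ‖u - w‖ := huw

theorem Polynomial.pow_mul_norm_eval_le_norm_eval {K : Type*} [NormedField K] [IsAlgClosed K]
    {f : K[X]} {N : ℕ} (hN : f.natDegree ≤ N) (hf : ∀ w, ‖w‖ < 1 → f.eval w ≠ 0) {u : K}
    (hu : ‖u‖ ≤ 1) (v : K) :
    ((1 - ‖u‖) / (1 + ‖v‖)) ^ N * ‖f.eval v‖ ≤ ‖f.eval u‖ := by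
  set k := (1 - ‖u‖) / (1 + ‖v‖)
  have hk0 : 0 ≤ k := div_nonneg (by linarith) (by positivity)
  have hk1 : k ≤ 1 := (div_le_one (by positivity)).2 (by linarith [norm_nonneg u, norm_nonneg v])
  have hroots : ∀ w ∈ f.roots, 1 ≤ ‖w‖ := fun w hw =>
    not_lt.1 fun hw1 => hf w hw1 (isRoot_of_mem_roots hw)
  have hcard : Multiset.card f.roots ≤ N := (card_roots' f).trans hN
  simp only [(IsAlgClosed.splits f).eval_eq_prod_roots, norm_mul, norm_multiset_prod,
    Multiset.map_map, Function.comp_def]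
  calc k ^ N * (‖f.leadingCoeff‖ * (f.roots.map fun w => ‖v - w‖).prod)
      ≤ k ^ Multiset.card f.roots * (‖f.leadingCoeff‖ * (f.roots.map fun w => ‖v - w‖).prod) := by
        refine mul_le_mul_of_nonneg_right (pow_le_pow_of_le_one hk0 hk1 hcard) ?_
        exact mul_nonneg (norm_nonneg _) (Multiset.prod_nonneg fun _ h => by
          obtain ⟨w, -, rfl⟩ := Multiset.mem_map.1 h; positivity)
    _ = ‖f.leadingCoeff‖ * (f.roots.map fun w => k * ‖v - w‖).prod := by
        rw [Multiset.prod_map_mul, Multiset.map_const', Multiset.prod_replicate]; ring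
    _ ≤ ‖f.leadingCoeff‖ * (f.roots.map fun w => ‖u - w‖).prod := by
        gcongr
        exact Multiset.prod_map_le_prod_map₀ _ _ (fun _ _ => by positivity)
          fun w hw => mul_norm_sub_le_norm_sub hu (hroots w hw) v

def blaschkeFactor (a z : ℂ) : ℂ := (z - a) / (1 - conj a * z)

theorem blaschkeFactor_zero (z : ℂ) : blaschkeFactor 0 z = z := by
  simp [blaschkeFactor]

theorem one_sub_conj_mul_eq_blaschkeFactor {w z : ℂ} (hw : w ≠ 0) (hz : z ≠ w) :
    1 - conj w * z = conj w / w * blaschkeFactor (conj w)⁻¹ z * (z - w) := by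
  have hw' : conj w ≠ 0 := by simpa using hw
  have hzw : w - z ≠ 0 := sub_ne_zero.2 hz.symm
  rw [blaschkeFactor, map_inv₀, Complex.conj_conj]
  field_simp
  ring

theorem Polynomial.eval_eq_prod_roots_of_reflection {q qt : ℂ[X]} {N : ℕ} {c : ℂ}
    (hN : q.natDegree ≤ N)
    (hrefl : ∀ z ≠ 0, qt.eval z = c * z ^ N * conj (q.eval (conj z)⁻¹)) (z : ℂ) :
    qt.eval z = c * conj q.leadingCoeff * z ^ (N - q.natDegree) *
      (q.roots.map fun w => 1 - conj w * z).prod := by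
  have hcard : Multiset.card q.roots = q.natDegree :=
    splits_iff_card_roots.1 (IsAlgClosed.splits q)
  suffices (fun z => qt.eval z) = fun z => c * conj q.leadingCoeff * z ^ (N - q.natDegree) *
      (q.roots.map fun w => 1 - conj w * z).prod from congrFun this z
  refine Continuous.ext_on (dense_compl_singleton 0) qt.continuous
    (by fun_prop) fun z (hz : z ≠ 0) => ?_
  have hzpow : z ^ q.natDegree * (q.roots.map fun w => z⁻¹ - conj w).prod =
      (q.roots.map fun w => 1 - conj w * z).prod := by
    rw [← hcard, ← Multiset.prod_replicate, ← Multiset.map_const', ← Multiset.prod_map_mul]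
    congr 1
    refine Multiset.map_congr rfl fun w _ => ?_
    field_simp
  rw [hrefl z hz, (IsAlgClosed.splits q).eval_eq_prod_roots, map_mul, map_multiset_prod,
    Multiset.map_map, ← hzpow, ← Nat.sub_add_cancel hN, pow_add, Nat.add_sub_cancel]
  simp only [Function.comp_def, map_sub, map_inv₀, Complex.conj_conj]
  ring

theorem Polynomial.exists_blaschke_of_reflection {q qt : ℂ[X]} {N : ℕ} {c : ℂ} (hc : ‖c‖ = 1)
    (hN : q.natDegree ≤ N) (hq : ∀ z, ‖z‖ ≤ 1 → q.eval z ≠ 0)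
    (hrefl : ∀ z ≠ 0, qt.eval z = c * z ^ N * conj (q.eval (conj z)⁻¹)) :
    ∃ lam : ℂ, ‖lam‖ = 1 ∧ ∃ a : Fin N → ℂ, (∀ k, ‖a k‖ < 1) ∧
      ∀ z, ‖z‖ < 1 → qt.eval z = lam * (∏ k, blaschkeFactor (a k) z) * q.eval z := by
  set b := q.leadingCoeff
  set R := q.roots
  have hb : b ≠ 0 := leadingCoeff_ne_zero.2 fun h => hq 0 (by simp) (by simp [h])
  have hR : ∀ w ∈ R, 1 < ‖w‖ := fun w hw =>
    not_le.1 fun h => hq w h (isRoot_of_mem_roots hw)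
  have hR0 : ∀ w ∈ R, w ≠ 0 := fun w hw => norm_pos_iff.1 (one_pos.trans (hR w hw))
  set A := Multiset.replicate (N - q.natDegree) 0 + R.map fun w => (conj w)⁻¹
  have hA : Multiset.card A = N := by
    rw [Multiset.card_add, Multiset.card_replicate, Multiset.card_map,
      splits_iff_card_roots.1 (IsAlgClosed.splits q), Nat.sub_add_cancel hN]
  obtain ⟨a, haA, hprod⟩ := A.exists_fin_prod_map_eq (M := ℂ) hA
  refine ⟨c * conj b / b * (R.map fun w => conj w / w).prod, ?_, a, fun k => ?_, fun z hz => ?_⟩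
  · have h0R : (0 : ℂ) ∉ R := fun h => hR0 0 h rfl
    simp [hc, hb, h0R, norm_multiset_prod]
  · rcases Multiset.mem_add.1 (haA k) with h | h
    · simp [Multiset.eq_of_mem_replicate h]
    · obtain ⟨w, hw, hwa⟩ := Multiset.mem_map.1 h
      rw [← hwa]
      simpa using inv_lt_one_of_one_lt₀ (hR w hw)
  · have hfactor : (R.map fun w => 1 - conj w * z) =
        R.map fun w => conj w / w * blaschkeFactor (conj w)⁻¹ z * (z - w) :=
      Multiset.map_congr rfl fun w hw => one_sub_conj_mul_eq_blaschkeFactor (hR0 w hw)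
        fun h => by linarith [hR w hw, h ▸ hz]
    rw [eval_eq_prod_roots_of_reflection hN hrefl, hprod (blaschkeFactor · z),
      (IsAlgClosed.splits q).eval_eq_prod_roots, hfactor, Multiset.prod_map_mul,
      Multiset.prod_map_mul, Multiset.map_add, Multiset.prod_add, Multiset.map_replicate,
      Multiset.prod_replicate, Multiset.map_map]
    simp only [blaschkeFactor_zero, Function.comp_def]
    field_simp
    ring

section Slice

variable {R : Type*} [CommSemiring R] {d : ℕ}

def slicePoly (c : Fin d → R) (p : MvPolynomial (Fin (d + 1)) R) : R[X] :=
  (MvPolynomial.optionEquivLeft R (Fin d) (MvPolynomial.rename finSuccEquivLast p)).map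
    (MvPolynomial.eval c)

theorem eval_slicePoly (c : Fin d → R) (p : MvPolynomial (Fin (d + 1)) R) (z : R) :
    (slicePoly c p).eval z = MvPolynomial.eval (Fin.snoc c z) p := by
  rw [slicePoly, ← MvPolynomial.optionEquivLeft_elim_eval, MvPolynomial.eval_rename]
  congr 2
  funext j
  induction j using Fin.lastCases <;> simp [finSuccEquivLast_castSucc]

theorem natDegree_slicePoly_le (c : Fin d → R) (p : MvPolynomial (Fin (d + 1)) R) :
    (slicePoly c p).natDegree ≤ MvPolynomial.degreeOf (Fin.last d) p := by
  refine natDegree_map_le.trans_eq ?_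
  rw [MvPolynomial.natDegree_optionEquivLeft, ← finSuccEquivLast_last,
    MvPolynomial.degreeOf_rename_of_injective finSuccEquivLast.injective]

end Slice

section Stable

variable {d : ℕ} {p : MvPolynomial (Fin (d + 1)) ℂ}

theorem pow_mul_norm_eval_slicePoly_le
    (hp : ∀ z ∈ polyDisk (d + 1), MvPolynomial.eval z p ≠ 0) {c : Fin d → ℂ}
    (hc : ∀ i, ‖c i‖ ≤ 1) {u : ℂ} (hu : ‖u‖ ≤ 1) (v : ℂ) :
    ((1 - ‖u‖) / (1 + ‖v‖)) ^ MvPolynomial.degreeOf (Fin.last d) p *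
      ‖(slicePoly c p).eval v‖ ≤ ‖(slicePoly c p).eval u‖ := by
  have hlim : ∀ x : ℂ, Tendsto (fun r : ℝ => ‖(slicePoly (fun i => (r : ℂ) * c i) p).eval x‖)
      (𝓝[<] 1) (𝓝 ‖(slicePoly c p).eval x‖) := by
    intro x
    simp only [eval_slicePoly]
    refine (Continuous.tendsto' ?_ 1 _ ?_).norm.mono_left nhdsWithin_le_nhds
    · refine (MvPolynomial.continuous_eval p).comp (continuous_pi fun j => ?_)
      induction j using Fin.lastCases <;> simp <;> fun_prop
    · simp
  refine le_of_tendsto_of_tendsto ((hlim v).const_mul _) (hlim u) ?_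
  filter_upwards [Ioo_mem_nhdsLT zero_lt_one] with r hr
  refine pow_mul_norm_eval_le_norm_eval (natDegree_slicePoly_le _ p) (fun w hw => ?_) hu v
  rw [eval_slicePoly]
  refine hp _ fun j => ?_
  induction j using Fin.lastCases with
  | last => simpa using hw
  | cast i =>
    simpa [abs_of_pos hr.1] using (mul_le_of_le_one_right hr.1.le (hc i)).trans_lt hr.2

theorem eval_slicePoly_ne_zero
    (hp : ∀ z ∈ polyDisk (d + 1), MvPolynomial.eval z p ≠ 0) {c : Fin d → ℂ}
    (hc : ∀ i, ‖c i‖ ≤ 1) (hq : slicePoly c p ≠ 0) {u : ℂ} (hu : ‖u‖ < 1) :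
    (slicePoly c p).eval u ≠ 0 := by
  obtain ⟨v, -, hv⟩ : ∃ v ∈ Metric.ball (0 : ℂ) 1, ¬ (slicePoly c p).IsRoot v :=
    ((infinite_of_mem_nhds 0 (Metric.ball_mem_nhds 0 one_pos)).sdiff
      (finite_setOfPred_isRoot hq)).nonempty
  have hk : 0 < ((1 - ‖u‖) / (1 + ‖v‖)) ^ MvPolynomial.degreeOf (Fin.last d) p :=
    pow_pos (div_pos (by linarith) (by positivity)) _
  have := pow_mul_norm_eval_slicePoly_le hp hc hu.le v
  exact norm_pos_iff.1 ((mul_pos hk (norm_pos_iff.2 hv)).trans_le this)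

end Stable

theorem eval_slicePoly_of_isReflectionD {d : ℕ} {n : Fin (d + 1) → ℕ}
    {p pt : MvPolynomial (Fin (d + 1)) ℂ} (hrefl : IsReflectionD (d + 1) n p pt)
    {ζ' : Fin d → ℂ} (hζ' : ∀ i, ‖ζ' i‖ = 1) {z : ℂ} (hz : z ≠ 0) :
    (slicePoly ζ' pt).eval z = (∏ i, ζ' i ^ n i.castSucc) * z ^ n (Fin.last d) *
      conj ((slicePoly ζ' p).eval (conj z)⁻¹) := by
  have hζ'0 : ∀ i, ζ' i ≠ 0 := fun i => norm_ne_zero_iff.1 ((hζ' i).trans_ne one_ne_zero)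
  have hsnoc : ∀ j, (Fin.snoc ζ' z : Fin (d + 1) → ℂ) j ≠ 0 := fun j => by
    induction j using Fin.lastCases <;> simp [hz, hζ'0]
  rw [eval_slicePoly, eval_slicePoly, hrefl _ hsnoc, Fin.prod_univ_castSucc]
  simp only [Fin.snoc_castSucc, Fin.snoc_last]
  congr 4
  funext j
  induction j using Fin.lastCases with
  | last => simp
  | cast i => simp [← Complex.inv_eq_conj (hζ' i)]

theorem slice_is_finite_blaschke_product_general
    (d : ℕ) (n : Fin (d + 1) → ℕ)
    (p pt : MvPolynomial (Fin (d + 1)) ℂ)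
    (hdeg : ∀ j, MvPolynomial.degreeOf j p = n j)
    (hstable : ∀ z ∈ polyDisk (d + 1), MvPolynomial.eval z p ≠ 0)
    (hrefl : IsReflectionD (d + 1) n p pt)
    (ζ' : Fin d → ℂ) (hζ' : ∀ j, ‖ζ' j‖ = 1)
    (hnosing : ¬ ∃ τ : ℂ, ‖τ‖ = 1 ∧
      MvPolynomial.eval (Fin.snoc ζ' τ : Fin (d + 1) → ℂ) p = 0 ∧
      MvPolynomial.eval (Fin.snoc ζ' τ : Fin (d + 1) → ℂ) pt = 0) :
    ∃ lam : ℂ, ‖lam‖ = 1 ∧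
      ∃ a : Fin (n (Fin.last d)) → ℂ, (∀ k, ‖a k‖ < 1) ∧
        ∀ z : ℂ, ‖z‖ < 1 →
          MvPolynomial.eval (Fin.snoc ζ' z : Fin (d + 1) → ℂ) p ≠ 0 →
          MvPolynomial.eval (Fin.snoc ζ' z : Fin (d + 1) → ℂ) pt /
              MvPolynomial.eval (Fin.snoc ζ' z : Fin (d + 1) → ℂ) p =
            lam * ∏ k, (z - a k) / (1 - (starRingEnd ℂ) (a k) * z) := by
  set q := slicePoly ζ' p
  have hrefl' := fun z (hz : z ≠ 0) => eval_slicePoly_of_isReflectionD hrefl hζ' hz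
  have hcircle : ∀ τ : ℂ, ‖τ‖ = 1 → q.eval τ ≠ 0 := by
    intro τ hτ hqτ
    refine hnosing ⟨τ, hτ, by rwa [← eval_slicePoly], ?_⟩
    rw [← eval_slicePoly, hrefl' τ (norm_ne_zero_iff.1 (hτ.trans_ne one_ne_zero)),
      ← Complex.inv_eq_conj hτ, inv_inv, hqτ, map_zero, mul_zero]
  have hq : q ≠ 0 := fun h => hcircle 1 norm_one (by simp [h])
  have hdisk : ∀ z : ℂ, ‖z‖ ≤ 1 → q.eval z ≠ 0 := fun z hz =>
    hz.lt_or_eq.elim (eval_slicePoly_ne_zero hstable (fun i => (hζ' i).le) hq) (hcircle z)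
  have hc : ‖∏ i, ζ' i ^ n i.castSucc‖ = 1 := by simp [hζ']
  obtain ⟨lam, hlam, a, ha, hφ⟩ := Polynomial.exists_blaschke_of_reflection hc
    ((natDegree_slicePoly_le ζ' p).trans_eq (hdeg _)) hdisk hrefl'
  refine ⟨lam, hlam, a, ha, fun z hz hpz => ?_⟩
  rw [← eval_slicePoly, ← eval_slicePoly, div_eq_iff (by rwa [eval_slicePoly]), hφ z hz]
  rfl

/-- Let `φ = p̃/p` be a RIF on `𝔻^{d+1}` of polydegree `n`. Fix
`ζ' ∈ 𝕋^d` and suppose `φ` has no singularity of the form `(ζ', τ)` with `τ ∈ 𝕋`.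
Then the slice `z ↦ φ(ζ', z)` is a finite Blaschke product of degree exactly
`n_{d+1}`: there are `λ ∈ 𝕋` and `a₁, …, a_{n_{d+1}} ∈ 𝔻` with
`φ(ζ', z) = λ ∏ (z − a_k)/(1 − conj(a_k) z)`. -/
theorem slice_is_finite_blaschke_product
    (d : ℕ) (n : Fin (d + 1) → ℕ) (hn : ∀ j, 1 ≤ n j)
    (p pt : MvPolynomial (Fin (d + 1)) ℂ)
    (hdeg : ∀ j, MvPolynomial.degreeOf j p = n j)
    (hstable : ∀ z ∈ polyDisk (d + 1), MvPolynomial.eval z p ≠ 0)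
    (hrefl : IsReflectionD (d + 1) n p pt)
    (hcoprime : ∀ r : MvPolynomial (Fin (d + 1)) ℂ, r ∣ p → r ∣ pt → IsUnit r)
    (ζ' : Fin d → ℂ) (hζ' : ∀ j, ‖ζ' j‖ = 1)
    (hnosing : ¬ ∃ τ : ℂ, ‖τ‖ = 1 ∧
      MvPolynomial.eval (Fin.snoc ζ' τ : Fin (d + 1) → ℂ) p = 0 ∧
      MvPolynomial.eval (Fin.snoc ζ' τ : Fin (d + 1) → ℂ) pt = 0) :
    ∃ lam : ℂ, ‖lam‖ = 1 ∧
      ∃ a : Fin (n (Fin.last d)) → ℂ, (∀ k, ‖a k‖ < 1) ∧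
        ∀ z : ℂ, ‖z‖ < 1 →
          MvPolynomial.eval (Fin.snoc ζ' z : Fin (d + 1) → ℂ) p ≠ 0 →
          MvPolynomial.eval (Fin.snoc ζ' z : Fin (d + 1) → ℂ) pt /
              MvPolynomial.eval (Fin.snoc ζ' z : Fin (d + 1) → ℂ) p =
            lam * ∏ k, (z - a k) / (1 - (starRingEnd ℂ) (a k) * z) :=
  slice_is_finite_blaschke_product_general d n p pt hdeg hstable hrefl ζ' hζ' hnosing
end
end

section
/- Let φ = p̃/p be a bidegree (m,n) rational inner function on 𝔻² and suppose that for some τ ∈ 𝕋 and α ∈ 𝕋 the vertical line {ζ ∈ 𝕋² : ζ₁ = τ} is contained in C_α(φ). Then there exists a constant c₁ ≠ 0 such that ∂φ/∂z₁(τ, z₂) = c₁ for all z₂ ∈ 𝔻. -/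
open MeasureTheory Complex Filter Topology

noncomputable section

/-- The open unit bidisk `𝔻²` in `ℂ²`. -/
def bidisk : Set (ℂ × ℂ) := {z | ‖z.1‖ < 1 ∧ ‖z.2‖ < 1}

/-- The closed bidisk. -/
def closedBidisk : Set (ℂ × ℂ) := {z | ‖z.1‖ ≤ 1 ∧ ‖z.2‖ ≤ 1}

/-- The distinguished boundary `𝕋²` of the bidisk. -/
def torus2 : Set (ℂ × ℂ) := {z | ‖z.1‖ = 1 ∧ ‖z.2‖ = 1}

/-- Evaluation of a two-variable polynomial at a point of `ℂ²`. -/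
def ev (p : MvPolynomial (Fin 2) ℂ) (z : ℂ × ℂ) : ℂ :=
  MvPolynomial.eval ![z.1, z.2] p

/-- The rational function `φ = p̃/p`. -/
def rif (p pt : MvPolynomial (Fin 2) ℂ) (z : ℂ × ℂ) : ℂ := ev pt z / ev p z

/-- The partial derivative `∂φ/∂z₁` of `φ = p̃/p`, via the quotient rule. -/
def dphi1 (p pt : MvPolynomial (Fin 2) ℂ) (z : ℂ × ℂ) : ℂ :=
  (ev (MvPolynomial.pderiv 0 pt) z * ev p z - ev pt z * ev (MvPolynomial.pderiv 0 p) z) /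
    (ev p z) ^ 2

/-- The partial derivative `∂φ/∂z₂` of `φ = p̃/p`, via the quotient rule. -/
def dphi2 (p pt : MvPolynomial (Fin 2) ℂ) (z : ℂ × ℂ) : ℂ :=
  (ev (MvPolynomial.pderiv 1 pt) z * ev p z - ev pt z * ev (MvPolynomial.pderiv 1 p) z) /
    (ev p z) ^ 2

/-- `pt` is the reflection `p̃(z₁,z₂) = z₁^m z₂^n conj(p(1/conj z₁, 1/conj z₂))` of `p`
at bidegree `(m,n)`. -/
def IsReflection2 (m n : ℕ) (p pt : MvPolynomial (Fin 2) ℂ) : Prop :=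
  ∀ z : ℂ × ℂ, z.1 ≠ 0 → z.2 ≠ 0 →
    ev pt z = z.1 ^ m * z.2 ^ n *
      (starRingEnd ℂ) (ev p (((starRingEnd ℂ) z.1)⁻¹, ((starRingEnd ℂ) z.2)⁻¹))

/-- The data of a bidegree `(m,n)` rational inner function `φ = p̃/p` on the bidisk
(with `m, n ≥ 1`):  `p` has degree `m` in `z₁` and `n` in `z₂`, is zero-free on `𝔻²`,
and has no common factor with its reflection `p̃`. -/
structure IsRIF2 (m n : ℕ) (p pt : MvPolynomial (Fin 2) ℂ) : Prop where
  hm : 1 ≤ m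
  hn : 1 ≤ n
  deg1 : MvPolynomial.degreeOf 0 p = m
  deg2 : MvPolynomial.degreeOf 1 p = n
  stable : ∀ z ∈ bidisk, ev p z ≠ 0
  coprime : ∀ r : MvPolynomial (Fin 2) ℂ, r ∣ p → r ∣ pt → IsUnit r
  reflection : IsReflection2 m n p pt

/-- The unimodular level set `C_α(φ)`, the closure of the set of points of `𝕋²` where
the radial limit of `φ` equals `α`. -/
def levelSet2 (p pt : MvPolynomial (Fin 2) ℂ) (α : ℂ) : Set (ℂ × ℂ) :=
  closure {ζ | ζ ∈ torus2 ∧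
    Tendsto (fun r : ℝ => rif p pt ((r : ℂ) * ζ.1, (r : ℂ) * ζ.2))
      (𝓝[<] (1 : ℝ)) (𝓝 α)}

/-- `α` is an exceptional value for `φ = p̃/p`: some horizontal or vertical line of `𝕋²`
is contained in `C_α(φ)`. -/
def IsExceptional (p pt : MvPolynomial (Fin 2) ℂ) (α : ℂ) : Prop :=
  ∃ τ : ℂ, ‖τ‖ = 1 ∧
    ({ζ : ℂ × ℂ | ζ.1 = τ ∧ ‖ζ.2‖ = 1} ⊆ levelSet2 p pt α ∨
     {ζ : ℂ × ℂ | ‖ζ.1‖ = 1 ∧ ζ.2 = τ} ⊆ levelSet2 p pt α)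

/-- `α` is a generic value for `φ = p̃/p`. -/
def IsGenericValue (p pt : MvPolynomial (Fin 2) ℂ) (α : ℂ) : Prop :=
  ¬ IsExceptional p pt α

/-- Normalized Lebesgue (arclength) measure on the unit circle, as a measure on `ℂ`. -/
def mCircle : Measure ℂ :=
  (ENNReal.ofReal (2 * Real.pi))⁻¹ •
    Measure.map (fun θ : ℝ => Complex.exp ((θ : ℂ) * Complex.I))
      (MeasureTheory.volume.restrict (Set.Ico 0 (2 * Real.pi)))

/-- The two-variable product Poisson kernel. -/
def poisson2 (z ζ : ℂ × ℂ) : ℝ :=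
  ((1 - ‖z.1‖ ^ 2) / ‖ζ.1 - z.1‖ ^ 2) * ((1 - ‖z.2‖ ^ 2) / ‖ζ.2 - z.2‖ ^ 2)

/-- `σ` is the Clark measure of `φ = p̃/p` at parameter `α`: a positive Borel measure
on `𝕋²` whose Poisson integral is `(1-|φ(z)|²)/|α-φ(z)|²`. -/
def IsClarkMeasure2 (p pt : MvPolynomial (Fin 2) ℂ) (α : ℂ) (σ : Measure (ℂ × ℂ)) : Prop :=
  σ torus2ᶜ = 0 ∧
  ∀ z ∈ bidisk,
    ∫⁻ ζ, ENNReal.ofReal (poisson2 z ζ) ∂σ =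
      ENNReal.ofReal ((1 - ‖rif p pt z‖ ^ 2) / ‖α - rif p pt z‖ ^ 2)

/-- `g₁, …, g_n : 𝕋 → 𝕋` are functions on the circle, analytic except possibly at one
base point `τ₀ ∈ 𝕋`. -/
def IsGraphFamily (n : ℕ) (g : Fin n → ℂ → ℂ) : Prop :=
  (∀ j, ∀ ζ : ℂ, ‖ζ‖ = 1 → ‖g j ζ‖ = 1) ∧
  ∃ τ₀ : ℂ, ‖τ₀‖ = 1 ∧ ∀ j, ∀ θ : ℝ,
    Complex.exp ((θ : ℂ) * Complex.I) ≠ τ₀ →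
      AnalyticAt ℝ (fun t : ℝ => g j (Complex.exp ((t : ℂ) * Complex.I))) θ

/-- The union of the graphs `{(ζ, g_j(ζ)) : ζ ∈ 𝕋}`. -/
def graphUnion (n : ℕ) (g : Fin n → ℂ → ℂ) : Set (ℂ × ℂ) :=
  ⋃ j, {w : ℂ × ℂ | ‖w.1‖ = 1 ∧ w.2 = g j w.1}

/-- The vertical line `{ζ ∈ 𝕋² : ζ₁ = τ}`. -/
def vLine (τ : ℂ) : Set (ℂ × ℂ) := {w : ℂ × ℂ | w.1 = τ ∧ ‖w.2‖ = 1}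

/-!
Fix `z₂ ∈ 𝔻` and look at the slice `f(z₁) = φ(z₁, z₂)`. It maps `𝔻` into the closed disk: on
`𝕋 × 𝔻` the reflection formula gives `|p̃| ≤ |p|`, because every root of the one-variable
polynomial `p(ζ, ·)` lies outside `𝔻`. The polynomial `p(τ, ·)` is not identically zero (else
`z₁ - τ` would divide `p` and `p̃`) and, by a Hurwitz argument, has no zeros in `𝔻`; so `f` is
analytic at `τ`. Containment of the line in `C_α(φ)` forces `p̃(τ, ·) = α p(τ, ·)`, i.e. `f(τ) = α`,
and Julia's lemma makes `conj α · τ · f'(τ)` a positive real number unless `f ≡ α`.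
Hence `z₂ ↦ conj α · τ · ∂φ/∂z₁(τ, z₂)` is a real-valued holomorphic function on `𝔻`, so a
constant `c`; if `c = 0` every slice is constant, `p̃ = α p`, and `p` would divide `p̃`.
-/

-- In `ComplexOrder`, `0 < z` says that `z` is a positive real number.
open scoped ComplexOrder ComplexConjugate Polynomial

theorem exists_mem_sphere_norm_le_of_ne_zero {G : ℂ → ℂ} {a : ℂ} {ρ : ℝ} (hρ : 0 < ρ)
    (hG : DiffContOnCl ℂ G (Metric.ball a ρ)) (hG0 : ∀ z ∈ Metric.closedBall a ρ, G z ≠ 0) :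
    ∃ w ∈ Metric.sphere a ρ, ‖G w‖ ≤ ‖G a‖ := by
  rw [← closure_ball a hρ.ne'] at hG0
  obtain ⟨w, hw, hmax⟩ := Complex.exists_mem_frontier_isMaxOn_norm Metric.isBounded_ball
    (Metric.nonempty_ball.2 hρ) (hG.inv hG0)
  rw [frontier_ball a hρ.ne'] at hw
  refine ⟨w, hw, ?_⟩
  have hle : ‖(G a)⁻¹‖ ≤ ‖(G w)⁻¹‖ := hmax (subset_closure (Metric.mem_ball_self hρ))
  rwa [norm_inv, norm_inv, inv_le_inv₀ (norm_pos_iff.2 (hG0 a (subset_closure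
    (Metric.mem_ball_self hρ)))) (norm_pos_iff.2 (hG0 w ?_))] at hle
  rw [closure_ball a hρ.ne']
  exact Metric.sphere_subset_closedBall hw

/-- A Hurwitz-type statement: a limit of zero-free holomorphic functions cannot acquire an
isolated zero. -/
theorem ne_zero_of_mem_closure_of_ne_zero {F : ℂ × ℂ → ℂ} (hF : Continuous F) {S : Set ℂ}
    {ζ a : ℂ} {ρ : ℝ} (hρ : 0 < ρ) (hζ : ζ ∈ closure S)
    (hdiff : ∀ c ∈ S, DiffContOnCl ℂ (fun w => F (c, w)) (Metric.ball a ρ))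
    (hne : ∀ c ∈ S, ∀ w ∈ Metric.closedBall a ρ, F (c, w) ≠ 0)
    (hsphere : ∀ w ∈ Metric.sphere a ρ, F (ζ, w) ≠ 0) : F (ζ, a) ≠ 0 := by
  intro hζa
  have hnear : ∀ᶠ c in 𝓝 ζ, ∀ w ∈ Metric.sphere a ρ, ‖F (c, a)‖ < ‖F (c, w)‖ := by
    refine (isCompact_sphere a ρ).eventually_forall_of_forall_eventually fun w hw => ?_
    have hcont : Continuous fun x : ℂ × ℂ => ‖F x‖ - ‖F (x.1, a)‖ := by fun_prop
    have hpos : 0 < ‖F (ζ, w)‖ - ‖F (ζ, a)‖ := by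
      simpa [hζa] using hsphere w hw
    filter_upwards [continuousAt_const.eventually_lt hcont.continuousAt hpos] with x hx
    linarith
  obtain ⟨c, hc, hcS⟩ := (hnear.and_frequently (mem_closure_iff_frequently.1 hζ)).exists
  obtain ⟨w, hw, hle⟩ := exists_mem_sphere_norm_le_of_ne_zero hρ (hdiff c hcS) (hne c hcS)
  exact (hc w hw).not_ge hle

theorem infinite_sphere_zero_one : (Metric.sphere (0 : ℂ) 1).Infinite :=
  (isPreconnected_sphere (by simp [Complex.rank_real_complex]) 0 1).infinite_of_nontrivial
    ⟨1, by simp, -1, by simp, by norm_num⟩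

theorem norm_mul_norm_conj_inv_sub_le {z r : ℂ} (hz0 : z ≠ 0) (hz : ‖z‖ ≤ 1) (hr : 1 ≤ ‖r‖) :
    ‖z‖ * ‖(conj z)⁻¹ - r‖ ≤ ‖z - r‖ := by
  have hfactor : ‖z‖ * ‖(conj z)⁻¹ - r‖ = ‖1 - conj r * z‖ := by
    rw [← RCLike.norm_conj z, ← norm_mul, mul_sub, mul_inv_cancel₀ ((map_ne_zero _).2 hz0),
      ← RCLike.norm_conj, map_sub, map_one, map_mul, Complex.conj_conj, mul_comm]
  rw [hfactor, ← sq_le_sq₀ (norm_nonneg _) (norm_nonneg _), Complex.sq_norm, Complex.sq_norm]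
  have hdiff : normSq (z - r) - normSq (1 - conj r * z) = (normSq r - 1) * (1 - normSq z) := by
    simp only [Complex.normSq_apply, Complex.sub_re, Complex.sub_im, Complex.mul_re,
      Complex.mul_im, Complex.conj_re, Complex.conj_im, Complex.one_re, Complex.one_im]
    ring
  have hr' : 1 ≤ normSq r := by rw [← Complex.sq_norm]; nlinarith
  have hz' : normSq z ≤ 1 := by rw [← Complex.sq_norm]; nlinarith [norm_nonneg z]
  nlinarith

/-- The one-variable reflection inequality `|z^n conj F(1/conj z)| ≤ |F(z)|` on the punctured
disk, for `F` of degree at most `n` without zeros in the disk. -/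
theorem norm_pow_mul_conj_eval_inv_le {F : ℂ[X]} {n : ℕ} (hdeg : F.natDegree ≤ n)
    (hF : ∀ a : ℂ, ‖a‖ < 1 → F.eval a ≠ 0) {z : ℂ} (hz : ‖z‖ < 1) (hz0 : z ≠ 0) :
    ‖z ^ n * conj (F.eval (conj z)⁻¹)‖ ≤ ‖F.eval z‖ := by
  have hsplit := IsAlgClosed.splits F
  have hroots : ∀ r ∈ F.roots, 1 ≤ ‖r‖ := fun r hr => not_lt.1 fun hlt =>
    hF r hlt (Polynomial.isRoot_of_mem_roots hr)
  have hcard : F.roots.card ≤ n := (Polynomial.card_roots' F).trans hdeg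
  have hprod : ∀ s : Multiset ℂ, (∀ r ∈ s, 1 ≤ ‖r‖) →
      ‖z‖ ^ s.card * ‖(s.map ((conj z)⁻¹ - ·)).prod‖ ≤ ‖(s.map (z - ·)).prod‖ := by
    intro s
    induction s using Multiset.induction_on with
    | empty => simp
    | cons r s ih =>
      intro hs
      simp only [Multiset.card_cons, Multiset.map_cons, Multiset.prod_cons, norm_mul, pow_succ]
      calc ‖z‖ ^ s.card * ‖z‖ * (‖(conj z)⁻¹ - r‖ * ‖(s.map ((conj z)⁻¹ - ·)).prod‖)
          = (‖z‖ * ‖(conj z)⁻¹ - r‖) * (‖z‖ ^ s.card * ‖(s.map ((conj z)⁻¹ - ·)).prod‖) := by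
            ring
        _ ≤ ‖z - r‖ * ‖(s.map (z - ·)).prod‖ := by
            gcongr
            · exact norm_mul_norm_conj_inv_sub_le hz0 hz.le (hs r (Multiset.mem_cons_self r s))
            · exact ih fun r' hr' => hs r' (Multiset.mem_cons_of_mem hr')
  rw [hsplit.eval_eq_prod_roots, hsplit.eval_eq_prod_roots, norm_mul, norm_mul, RCLike.norm_conj,
    norm_mul, norm_pow, ← Nat.sub_add_cancel hcard, pow_add]
  calc ‖z‖ ^ (n - F.roots.card) * ‖z‖ ^ F.roots.card *
        (‖F.leadingCoeff‖ * ‖(F.roots.map ((conj z)⁻¹ - ·)).prod‖)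
      = ‖F.leadingCoeff‖ * (‖z‖ ^ (n - F.roots.card) *
          (‖z‖ ^ F.roots.card * ‖(F.roots.map ((conj z)⁻¹ - ·)).prod‖)) := by ring
    _ ≤ ‖F.leadingCoeff‖ * (1 * ‖(F.roots.map (z - ·)).prod‖) := by
        gcongr
        · exact pow_le_one₀ (norm_nonneg z) hz.le
        · exact hprod _ hroots
    _ = _ := by rw [one_mul]

theorem re_pow_mul_nonneg_of_re_nonneg_along_ray {h g : ℂ → ℂ} {τ v : ℂ} {k : ℕ}
    (hg : ContinuousAt g τ) (hhg : ∀ᶠ z in 𝓝 τ, h z = (z - τ) ^ k * g z)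
    (hre : ∀ᶠ t : ℝ in 𝓝[>] 0, 0 ≤ (h (τ + t * v)).re) :
    0 ≤ (v ^ k * g τ).re := by
  have hray : Tendsto (fun t : ℝ => τ + t * v) (𝓝[>] 0) (𝓝 τ) := by
    have : Continuous fun t : ℝ => τ + t * v := by fun_prop
    simpa using this.continuousAt.tendsto.mono_left (nhdsWithin_le_nhds (a := 0))
  have hlim : Tendsto (fun t : ℝ => (v ^ k * g (τ + t * v)).re) (𝓝[>] 0) (𝓝 (v ^ k * g τ).re) :=
    (Complex.continuous_re.tendsto _).comp ((hg.tendsto.comp hray).const_mul _)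
  refine ge_of_tendsto hlim ?_
  filter_upwards [hre, hray.eventually hhg, self_mem_nhdsWithin] with t hre ht (htpos : 0 < t)
  rw [ht, add_sub_cancel_left, mul_pow, ← Complex.ofReal_pow, mul_assoc,
    Complex.re_ofReal_mul] at hre
  exact nonneg_of_mul_nonneg_right hre (pow_pos htpos k)

theorem eventually_mem_ball_along_inward_ray {τ u : ℂ} (hτ : ‖τ‖ = 1) (hu : 0 < u.re) :
    ∀ᶠ t : ℝ in 𝓝[>] 0, τ + t * (-τ * u) ∈ Metric.ball (0 : ℂ) 1 := by
  have hnormSq : 0 < normSq u := Complex.normSq_pos.2 fun h => by simp [h] at hu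
  filter_upwards [Ioo_mem_nhdsGT (div_pos hu hnormSq)] with t ⟨ht0, ht⟩
  rw [lt_div_iff₀ hnormSq] at ht
  have hfactor : τ + t * (-τ * u) = τ * (1 - t * u) := by ring
  rw [mem_ball_zero_iff, hfactor, norm_mul, hτ, one_mul, ← sq_lt_one_iff₀ (norm_nonneg _),
    Complex.sq_norm]
  simp only [Complex.normSq_apply, Complex.normSq_apply] at hnormSq ht ⊢
  simp only [Complex.sub_re, Complex.sub_im, Complex.one_re, Complex.one_im, Complex.mul_re,
    Complex.mul_im, Complex.ofReal_re, Complex.ofReal_im]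
  nlinarith

theorem eq_one_and_pos_of_re_pow_mul_nonneg {w : ℂ} {k : ℕ} (hw : w ≠ 0) (hk : 1 ≤ k)
    (h : ∀ u : ℂ, 0 < u.re → 0 ≤ (u ^ k * w).re) : k = 1 ∧ 0 < w := by
  have hclosed : IsClosed {u : ℂ | 0 ≤ (u ^ k * w).re} :=
    isClosed_le continuous_const (by fun_prop)
  have hre : ∀ u ∈ closure {u : ℂ | 0 < u.re}, 0 ≤ (u ^ k * w).re :=
    fun u hu => closure_minimal (fun u hu => h u hu) hclosed hu
  rw [Complex.closure_setOfPred_lt_re] at hre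
  have hk1 : (1 : ℝ) ≤ k := by exact_mod_cast hk
  have hkpos : (0 : ℝ) < k := by linarith
  -- test `u = exp(s I / k)`, whose `k`-th power is `exp(s I)`
  have hexp : ∀ s : ℝ, |s| ≤ k * (Real.pi / 2) → 0 ≤ (Complex.exp (s * Complex.I) * w).re := by
    intro s hs
    have hu := hre (Complex.exp ((s / k : ℝ) * Complex.I)) (by
      rw [Set.mem_ofPred_eq, Complex.exp_ofReal_mul_I_re]
      refine Real.cos_nonneg_of_mem_Icc (abs_le.1 ?_)
      rw [abs_div, Nat.abs_cast, div_le_iff₀' hkpos]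
      exact hs)
    rwa [← Complex.exp_nat_mul, Complex.ofReal_div, Complex.ofReal_natCast, ← mul_assoc,
      mul_div_cancel₀ _ (by exact_mod_cast hkpos.ne')] at hu
  have hpi := Real.pi_pos
  have h0 := hexp 0 (by rw [abs_zero]; positivity)
  have hpos := hexp (Real.pi / 2) (by rw [abs_of_pos (by positivity)]; nlinarith)
  have hneg := hexp (-(Real.pi / 2)) (by rw [abs_neg, abs_of_pos (by positivity)]; nlinarith)
  simp only [Complex.ofReal_zero, zero_mul, Complex.exp_zero, one_mul, Complex.ofReal_neg,
    neg_mul, Complex.exp_neg, Complex.ofReal_div, Complex.ofReal_ofNat,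
    Complex.exp_pi_div_two_mul_I] at h0 hpos hneg
  simp only [Complex.inv_I, Complex.mul_re, Complex.I_re, Complex.I_im, Complex.neg_re,
    zero_mul, one_mul, zero_sub, neg_mul, neg_neg] at hpos hneg
  have him : w.im = 0 := by linarith
  have hk_eq : k = 1 := by
    by_contra hk2
    have hk2' : (2 : ℝ) ≤ k := by exact_mod_cast (by omega : 2 ≤ k)
    have hπ := hexp Real.pi (by rw [abs_of_pos hpi]; nlinarith)
    rw [Complex.exp_pi_mul_I, neg_one_mul, Complex.neg_re] at hπ
    exact hw (Complex.ext (by rw [Complex.zero_re]; linarith) (by simpa using him))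
  refine ⟨hk_eq, Complex.pos_iff.2 ⟨h0.lt_of_ne fun hre0 => hw ?_, him.symm⟩⟩
  exact Complex.ext (by simpa using hre0.symm) (by simpa using him)

theorem AnalyticOnNhd.eqOn_of_preconnected_of_eventuallyEq_of_mem_closure {f g : ℂ → ℂ}
    {U : Set ℂ} {τ : ℂ} (hf : AnalyticOnNhd ℂ f U) (hg : AnalyticOnNhd ℂ g U)
    (hU : IsPreconnected U) (hτ : τ ∈ closure U) (hfg : f =ᶠ[𝓝 τ] g) : Set.EqOn f g U := by
  obtain ⟨z₀, hz₀, hz₀U⟩ :=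
    (hfg.eventually_nhds.and_frequently (mem_closure_iff_frequently.1 hτ)).exists
  exact hf.eqOn_of_preconnected_of_eventuallyEq hg hU hz₀U hz₀

/-- Julia's lemma for functions of nonnegative real part: a boundary zero of finite order is
simple. -/
theorem pos_neg_mul_deriv_of_re_nonneg {h : ℂ → ℂ} {τ : ℂ} (hτ : ‖τ‖ = 1)
    (hh : AnalyticAt ℂ h τ) (hre : ∀ z ∈ Metric.ball (0 : ℂ) 1, 0 ≤ (h z).re) (hτ0 : h τ = 0)
    (hne : ¬∀ᶠ z in 𝓝 τ, h z = 0) : 0 < -τ * deriv h τ := by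
  obtain ⟨k, g, hg, hgτ, hhg⟩ := hh.exists_eventuallyEq_pow_smul_nonzero_iff.2 hne
  simp only [smul_eq_mul] at hhg
  have hk : 1 ≤ k := Nat.one_le_iff_ne_zero.2 fun hk0 => hgτ <| by
    simpa [hk0, hτ0] using hhg.self_of_nhds.symm
  have hcone : ∀ u : ℂ, 0 < u.re → 0 ≤ (u ^ k * ((-τ) ^ k * g τ)).re := fun u hu => by
    have := re_pow_mul_nonneg_of_re_nonneg_along_ray (v := -τ * u) hg.continuousAt hhg
      ((eventually_mem_ball_along_inward_ray hτ hu).mono fun t ht => hre _ ht)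
    rwa [mul_pow, mul_comm ((-τ) ^ k), mul_assoc] at this
  have hτ0 : -τ ≠ 0 := neg_ne_zero.2 (norm_ne_zero_iff.1 (by rw [hτ]; norm_num))
  obtain ⟨rfl, hpos⟩ :=
    eq_one_and_pos_of_re_pow_mul_nonneg (mul_ne_zero (pow_ne_zero _ hτ0) hgτ) hk hcone
  have hderiv : HasDerivAt h (g τ) τ := by
    have := ((hasDerivAt_id τ).sub_const τ).mul hg.differentiableAt.hasDerivAt
    simp only [id, sub_self, zero_mul, add_zero, one_mul] at this
    exact this.congr_of_eventuallyEq (hhg.mono fun z hz => by simpa using hz)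
  rwa [hderiv.deriv, ← pow_one (-τ)]

/-- Julia's lemma at a boundary point of analyticity: the angular derivative
`conj α * τ * f' τ` is positive unless `f` is constant. -/
theorem eqOn_const_or_pos_conj_mul_deriv {f : ℂ → ℂ} {τ α : ℂ} (hτ : ‖τ‖ = 1) (hα : ‖α‖ = 1)
    (hf : AnalyticOnNhd ℂ f (Metric.ball 0 1)) (hfτ : AnalyticAt ℂ f τ)
    (hbound : ∀ z ∈ Metric.ball (0 : ℂ) 1, ‖f z‖ ≤ 1) (hτα : f τ = α) :
    (deriv f τ = 0 ∧ Set.EqOn f (fun _ => α) (Metric.ball 0 1)) ∨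
      0 < conj α * τ * deriv f τ := by
  have hαα : conj α * α = 1 := by
    rw [Complex.conj_mul', hα]; norm_num
  have hre : ∀ z ∈ Metric.ball (0 : ℂ) 1, 0 ≤ (1 - conj α * f z).re := fun z hz => by
    have hnorm : ‖conj α * f z‖ ≤ 1 := by
      rw [norm_mul, RCLike.norm_conj, hα, one_mul]; exact hbound z hz
    rw [Complex.sub_re, Complex.one_re, sub_nonneg]
    exact (Complex.re_le_norm _).trans hnorm
  by_cases hzero : ∀ᶠ z in 𝓝 τ, 1 - conj α * f z = 0
  · have hfα : f =ᶠ[𝓝 τ] fun _ => α := hzero.mono fun z hz => by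
      rw [← one_mul (f z), ← hαα, mul_comm (conj α), mul_assoc, ← sub_eq_zero.1 hz, mul_one]
    refine Or.inl ⟨hfα.deriv_eq.trans (deriv_const τ α), ?_⟩
    exact hf.eqOn_of_preconnected_of_eventuallyEq_of_mem_closure analyticOnNhd_const
      (convex_ball 0 1).isPreconnected
      (by rw [closure_ball 0 one_ne_zero, mem_closedBall_zero_iff, hτ]) hfα
  · have hderiv : HasDerivAt (fun z => 1 - conj α * f z) (-(conj α * deriv f τ)) τ :=
      (hfτ.differentiableAt.hasDerivAt.const_mul _).const_sub 1
    have := pos_neg_mul_deriv_of_re_nonneg (h := fun z => 1 - conj α * f z) hτ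
      (analyticAt_const.sub (analyticAt_const.mul hfτ))
      hre (by rw [hτα, hαα, sub_self]) hzero
    rw [hderiv.deriv] at this
    exact Or.inr (by convert this using 1; ring)

section TwoVariables

open MvPolynomial

def evalFst (P : MvPolynomial (Fin 2) ℂ) (z : ℂ) : ℂ[X] :=
  aeval ![Polynomial.C z, Polynomial.X] P

@[simp]
theorem eval_evalFst (P : MvPolynomial (Fin 2) ℂ) (z w : ℂ) :
    (evalFst P z).eval w = ev P (z, w) := by
  rw [evalFst, ← Polynomial.coe_aeval_eq_eval, ← AlgHom.comp_apply, comp_aeval, ev,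
    ← coe_aeval_eq_eval, AlgHom.coe_toRingHom]
  congr 2
  ext i
  fin_cases i <;> simp

theorem natDegree_evalFst_le (P : MvPolynomial (Fin 2) ℂ) (z : ℂ) :
    (evalFst P z).natDegree ≤ P.degreeOf 1 := by
  conv_lhs => rw [evalFst, P.as_sum, map_sum]
  refine Polynomial.natDegree_sum_le_of_forall_le _ _ fun v hv => ?_
  rw [aeval_monomial, Finsupp.prod_fintype _ _ (by simp), Fin.prod_univ_two]
  simp only [Matrix.cons_val_zero, Matrix.cons_val_one, ← Polynomial.C_pow,
    Polynomial.algebraMap_eq, ← mul_assoc, ← Polynomial.C_mul]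
  exact (Polynomial.natDegree_C_mul_X_pow_le _ _).trans (monomial_le_degreeOf 1 hv)

theorem AnalyticAt.ev_comp (P : MvPolynomial (Fin 2) ℂ) {g : ℂ → ℂ × ℂ} {z : ℂ}
    (hg : AnalyticAt ℂ g z) : AnalyticAt ℂ (fun w => ev P (g w)) z := by
  refine AnalyticAt.aeval_mvPolynomial (f := fun w => ![(g w).1, (g w).2]) (fun i => ?_) P
  fin_cases i
  exacts [analyticAt_fst.comp hg, analyticAt_snd.comp hg]

theorem continuous_ev (P : MvPolynomial (Fin 2) ℂ) : Continuous (ev P) :=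
  (MvPolynomial.continuous_eval P).comp (continuous_pi fun i => by fin_cases i <;> fun_prop)

theorem differentiable_ev_snd (P : MvPolynomial (Fin 2) ℂ) (x : ℂ) :
    Differentiable ℂ fun w => ev P (x, w) :=
  fun _ => (AnalyticAt.ev_comp P (analyticAt_const.prod analyticAt_id)).differentiableAt

theorem hasDerivAt_ev_fst (P : MvPolynomial (Fin 2) ℂ) (x y : ℂ) :
    HasDerivAt (fun w => ev P (w, y)) (ev (pderiv 0 P) (x, y)) x := by
  induction P using MvPolynomial.induction_on with
  | C a => simpa [ev] using hasDerivAt_const x a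
  | add P Q hP hQ =>
    simp only [ev, map_add] at hP hQ ⊢
    exact hP.add hQ
  | mul_X P i hP =>
    obtain rfl | rfl : i = 0 ∨ i = 1 := by fin_cases i <;> simp
    · have hfun : (fun w => ev (P * X 0) (w, y)) = fun w => ev P (w, y) * w := by
        ext; simp [ev]
      rw [hfun]
      exact (hP.mul (hasDerivAt_id' x)).congr_deriv
        (by simp [ev, Derivation.leibniz, add_comm, mul_comm])
    · have hfun : (fun w => ev (P * X 1) (w, y)) = fun w => ev P (w, y) * y := by
        ext; simp [ev]
      rw [hfun]
      exact (hP.mul_const y).congr_deriv (by simp [ev, Derivation.leibniz, pderiv_X, mul_comm])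

theorem X_sub_C_dvd_of_ev_eq_zero {f : MvPolynomial (Fin 2) ℂ} {τ : ℂ}
    (h : ∀ y, ev f (τ, y) = 0) : X 0 - C τ ∣ f := by
  have hroot : (finSuccEquiv ℂ 1 f).IsRoot (C τ) := by
    refine MvPolynomial.funext fun s => ?_
    rw [eval_polynomial_eval_finSuccEquiv, map_zero, eval_C, ← h (s 0), ev]
    congr 2
    funext i
    fin_cases i <;> rfl
  rw [← map_dvd_iff (finSuccEquiv ℂ 1), map_sub, finSuccEquiv_X_zero]
  rw [show finSuccEquiv ℂ 1 (C τ) = Polynomial.C (C τ) from (finSuccEquiv ℂ 1).commutes τ]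
  exact Polynomial.dvd_iff_isRoot.2 hroot

theorem not_isUnit_X_sub_C (τ : ℂ) : ¬ IsUnit (X 0 - C τ : MvPolynomial (Fin 2) ℂ) := fun hu => by
  simpa [ev] using (hu.map (MvPolynomial.eval ![τ, 0])).ne_zero

theorem eq_C_mul_of_ev_eq_on_bidisk {p pt : MvPolynomial (Fin 2) ℂ} {α : ℂ}
    (h : ∀ x y : ℂ, ‖x‖ < 1 → ‖y‖ < 1 → ev pt (x, y) = α * ev p (x, y)) :
    pt = C α * p := by
  refine funext_set (fun _ => Metric.ball 0 1)
    (fun _ => infinite_of_mem_nhds 0 (Metric.ball_mem_nhds 0 one_pos)) fun v hv => ?_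
  have hv' : ∀ i, ‖v i‖ < 1 := fun i => mem_ball_zero_iff.1 (hv i trivial)
  have hv2 : v = ![v 0, v 1] := by ext i; fin_cases i <;> rfl
  rw [hv2]
  simpa [ev] using h (v 0) (v 1) (hv' 0) (hv' 1)

end TwoVariables

section RationalFunction

variable {p pt : MvPolynomial (Fin 2) ℂ}

theorem analyticAt_rif_fst {x y : ℂ} (h : ev p (x, y) ≠ 0) :
    AnalyticAt ℂ (fun w => rif p pt (w, y)) x :=
  (AnalyticAt.ev_comp pt (analyticAt_id.prod analyticAt_const)).div
    (AnalyticAt.ev_comp p (analyticAt_id.prod analyticAt_const)) h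

theorem hasDerivAt_rif_fst {x y : ℂ} (h : ev p (x, y) ≠ 0) :
    HasDerivAt (fun w => rif p pt (w, y)) (dphi1 p pt (x, y)) x :=
  (hasDerivAt_ev_fst pt x y).div (hasDerivAt_ev_fst p x y) h

theorem analyticAt_dphi1_snd {x y : ℂ} (h : ev p (x, y) ≠ 0) :
    AnalyticAt ℂ (fun w => dphi1 p pt (x, w)) y := by
  have hev : ∀ P : MvPolynomial (Fin 2) ℂ, AnalyticAt ℂ (fun w => ev P (x, w)) y :=
    fun P => AnalyticAt.ev_comp P (analyticAt_const.prod analyticAt_id)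
  exact (((hev _).mul (hev _)).sub ((hev _).mul (hev _))).div ((hev _).pow 2) (pow_ne_zero 2 h)

theorem ev_eq_mul_of_tendsto_rif {ζ : ℂ × ℂ} {α : ℂ} (hp : ev p ζ ≠ 0)
    (hlim : Tendsto (fun r : ℝ => rif p pt ((r : ℂ) * ζ.1, (r : ℂ) * ζ.2)) (𝓝[<] 1) (𝓝 α)) :
    ev pt ζ = α * ev p ζ := by
  have hray : Tendsto (fun r : ℝ => ((r : ℂ) * ζ.1, (r : ℂ) * ζ.2)) (𝓝[<] 1) (𝓝 ζ) := by
    have : Continuous fun r : ℝ => ((r : ℂ) * ζ.1, (r : ℂ) * ζ.2) := by fun_prop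
    simpa using this.continuousAt.tendsto.mono_left (nhdsWithin_le_nhds (a := (1 : ℝ)))
  have hcont : ContinuousAt (rif p pt) ζ :=
    (continuous_ev pt).continuousAt.div (continuous_ev p).continuousAt hp
  rw [tendsto_nhds_unique hlim (hcont.tendsto.comp hray), rif, div_mul_cancel₀ _ hp]

end RationalFunction

namespace IsRIF2

variable {m n : ℕ} {p pt : MvPolynomial (Fin 2) ℂ}

theorem not_isUnit (hRIF : IsRIF2 m n p pt) : ¬ IsUnit p := fun hu => by
  obtain ⟨r, -, rfl⟩ := MvPolynomial.isUnit_iff_eq_C_of_isReduced.1 hu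
  have := hRIF.deg1
  rw [MvPolynomial.degreeOf_C] at this
  exact absurd hRIF.hm (by omega)

theorem ev_reflection_eq (hRIF : IsRIF2 m n p pt) {ζ y : ℂ} (hζ : ‖ζ‖ = 1) (hy : y ≠ 0) :
    ev pt (ζ, y) = ζ ^ m * y ^ n * conj (ev p (ζ, (conj y)⁻¹)) := by
  have hζ' : (conj ζ)⁻¹ = ζ := by
    rw [Complex.inv_eq_conj (by rwa [RCLike.norm_conj]), Complex.conj_conj]
  have hζ0 : ζ ≠ 0 := norm_ne_zero_iff.1 (by rw [hζ]; norm_num)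
  rw [hRIF.reflection (ζ, y) hζ0 hy, hζ']

theorem evalFst_ne_zero (hRIF : IsRIF2 m n p pt) {ζ : ℂ} (hζ : ‖ζ‖ = 1) : evalFst p ζ ≠ 0 := by
  intro h0
  have hp : ∀ y, ev p (ζ, y) = 0 := fun y => by rw [← eval_evalFst, h0, Polynomial.eval_zero]
  have hpt : evalFst pt ζ = 0 := by
    refine Polynomial.eq_zero_of_infinite_isRoot _
      ((Set.finite_singleton (0 : ℂ)).infinite_compl.mono fun y hy => ?_)
    simp [hRIF.ev_reflection_eq hζ hy, hp]
  exact not_isUnit_X_sub_C ζ (hRIF.coprime _ (X_sub_C_dvd_of_ev_eq_zero hp)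
    (X_sub_C_dvd_of_ev_eq_zero fun y => by rw [← eval_evalFst, hpt, Polynomial.eval_zero]))

theorem ev_ne_zero_of_norm_eq_one (hRIF : IsRIF2 m n p pt) {ζ a : ℂ} (hζ : ‖ζ‖ = 1)
    (ha : ‖a‖ < 1) : ev p (ζ, a) ≠ 0 := by
  -- a radius `ρ` for which the circle `|w - a| = ρ` avoids the zeros of `p(ζ, ·)`
  obtain ⟨ρ, ⟨hρ0, hρ1⟩, hρ⟩ := ((Set.Ioo_infinite (sub_pos.2 ha)).sdiff
    (((evalFst p ζ).roots.toFinset.finite_toSet).image fun r => ‖r - a‖)).nonempty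
  refine ne_zero_of_mem_closure_of_ne_zero (continuous_ev p) hρ0
    (by rw [closure_ball 0 one_ne_zero, mem_closedBall_zero_iff, hζ])
    (fun c _ => (differentiable_ev_snd p c).diffContOnCl) (fun c hc w hw => ?_) fun w hw h0 => ?_
  · refine hRIF.stable (c, w) ⟨mem_ball_zero_iff.1 hc, ?_⟩
    calc ‖w‖ ≤ ‖a‖ + ‖w - a‖ := by simpa using norm_add_le a (w - a)
      _ ≤ ‖a‖ + ρ := by gcongr; exact mem_closedBall_iff_norm.1 hw
      _ < 1 := by linarith
  · refine hρ ⟨w, ?_, mem_sphere_iff_norm.1 hw⟩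
    simpa [hRIF.evalFst_ne_zero hζ] using h0

theorem ev_ne_zero_of_norm_le_one (hRIF : IsRIF2 m n p pt) {x y : ℂ} (hx : ‖x‖ ≤ 1)
    (hy : ‖y‖ < 1) : ev p (x, y) ≠ 0 :=
  hx.lt_or_eq.elim (fun hx => hRIF.stable (x, y) ⟨hx, hy⟩)
    fun hx => hRIF.ev_ne_zero_of_norm_eq_one hx hy

theorem norm_ev_reflection_le_of_norm_eq_one (hRIF : IsRIF2 m n p pt) {ζ y : ℂ} (hζ : ‖ζ‖ = 1)
    (hy : ‖y‖ < 1) : ‖ev pt (ζ, y)‖ ≤ ‖ev p (ζ, y)‖ := by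
  have hpunct : ∀ y : ℂ, ‖y‖ < 1 → y ≠ 0 → ‖ev pt (ζ, y)‖ ≤ ‖ev p (ζ, y)‖ := by
    intro y hy hy0
    have hdeg : (evalFst p ζ).natDegree ≤ n := hRIF.deg2 ▸ natDegree_evalFst_le p ζ
    have := norm_pow_mul_conj_eval_inv_le hdeg
      (fun a ha => by simpa using hRIF.ev_ne_zero_of_norm_eq_one hζ ha) hy hy0
    rw [hRIF.ev_reflection_eq hζ hy0, mul_assoc, norm_mul, norm_pow, hζ, one_pow, one_mul]
    simpa using this
  rcases eq_or_ne y 0 with rfl | hy0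
  · have hcont : ∀ P : MvPolynomial (Fin 2) ℂ,
        Tendsto (fun y => ‖ev P (ζ, y)‖) (𝓝[≠] 0) (𝓝 ‖ev P (ζ, 0)‖) := fun P =>
      ((differentiable_ev_snd P ζ).continuous.norm.tendsto 0).mono_left nhdsWithin_le_nhds
    refine le_of_tendsto_of_tendsto (hcont pt) (hcont p) ?_
    filter_upwards [nhdsWithin_le_nhds (Metric.ball_mem_nhds (0 : ℂ) one_pos),
      self_mem_nhdsWithin] with y hy hy0
    exact hpunct y (mem_ball_zero_iff.1 hy) hy0
  · exact hpunct y hy hy0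

theorem norm_rif_le_one (hRIF : IsRIF2 m n p pt) {x y : ℂ} (hx : ‖x‖ < 1) (hy : ‖y‖ < 1) :
    ‖rif p pt (x, y)‖ ≤ 1 := by
  refine Complex.norm_le_of_forall_mem_frontier_norm_le (f := fun w => rif p pt (w, y))
    Metric.isBounded_ball (DifferentiableOn.diffContOnCl fun w hw => ?_) (fun w hw => ?_)
    (subset_closure (mem_ball_zero_iff.2 hx))
  · rw [closure_ball 0 one_ne_zero, mem_closedBall_zero_iff] at hw
    exact (analyticAt_rif_fst (hRIF.ev_ne_zero_of_norm_le_one hw hy)).differentiableAt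
      |>.differentiableWithinAt
  · rw [frontier_ball 0 one_ne_zero, mem_sphere_zero_iff_norm] at hw
    rw [rif, norm_div, div_le_one (norm_pos_iff.2 (hRIF.ev_ne_zero_of_norm_eq_one hw hy))]
    exact hRIF.norm_ev_reflection_le_of_norm_eq_one hw hy

theorem ev_reflection_eq_of_vLine_subset (hRIF : IsRIF2 m n p pt) {α τ : ℂ} (hτ : ‖τ‖ = 1)
    (hline : vLine τ ⊆ levelSet2 p pt α) (y : ℂ) : ev pt (τ, y) = α * ev p (τ, y) := by
  have hclosed : IsClosed {z | ev p z * (ev pt z - α * ev p z) = 0} :=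
    isClosed_eq ((continuous_ev p).mul
      ((continuous_ev pt).sub (continuous_const.mul (continuous_ev p)))) continuous_const
  have hlevel : levelSet2 p pt α ⊆ {z | ev p z * (ev pt z - α * ev p z) = 0} := by
    refine closure_minimal (fun ζ ⟨_, hlim⟩ => ?_) hclosed
    by_cases hp : ev p ζ = 0
    · simp [hp]
    · simp [ev_eq_mul_of_tendsto_rif hp hlim]
  set F := evalFst p τ * (evalFst pt τ - Polynomial.C α * evalFst p τ)
  have hF : F = 0 := Polynomial.eq_zero_of_infinite_isRoot _ <|
    infinite_sphere_zero_one.mono fun w hw => by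
      simpa [F] using hlevel (hline ⟨rfl, mem_sphere_zero_iff_norm.1 hw⟩)
  have := congrArg (Polynomial.eval y) ((mul_eq_zero.1 hF).resolve_left (hRIF.evalFst_ne_zero hτ))
  simp only [Polynomial.eval_sub, Polynomial.eval_mul, Polynomial.eval_C, eval_evalFst,
    Polynomial.eval_zero] at this
  exact sub_eq_zero.1 this

theorem reflection_ne_C_mul (hRIF : IsRIF2 m n p pt) (α : ℂ) : pt ≠ MvPolynomial.C α * p :=
  fun h => hRIF.not_isUnit (hRIF.coprime p dvd_rfl ⟨MvPolynomial.C α, by rw [h, mul_comm]⟩)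

theorem slice_const_or_pos_conj_mul_dphi1 (hRIF : IsRIF2 m n p pt) {α τ y : ℂ} (hα : ‖α‖ = 1)
    (hτ : ‖τ‖ = 1) (hline : vLine τ ⊆ levelSet2 p pt α) (hy : ‖y‖ < 1) :
    (dphi1 p pt (τ, y) = 0 ∧ ∀ x : ℂ, ‖x‖ < 1 → ev pt (x, y) = α * ev p (x, y)) ∨
      0 < conj α * τ * dphi1 p pt (τ, y) := by
  have hpτ := hRIF.ev_ne_zero_of_norm_eq_one hτ hy
  have hp : ∀ x ∈ Metric.ball (0 : ℂ) 1, ev p (x, y) ≠ 0 := fun x hx =>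
    hRIF.stable (x, y) ⟨mem_ball_zero_iff.1 hx, hy⟩
  rw [← (hasDerivAt_rif_fst (pt := pt) hpτ).deriv]
  refine (eqOn_const_or_pos_conj_mul_deriv hτ hα (fun x hx => analyticAt_rif_fst (hp x hx))
    (analyticAt_rif_fst hpτ) (fun x hx => hRIF.norm_rif_le_one (mem_ball_zero_iff.1 hx) hy)
    (by simp [rif, hRIF.ev_reflection_eq_of_vLine_subset hτ hline y, hpτ])).imp_left
    fun ⟨h0, heq⟩ => ⟨h0, fun x hx => ?_⟩
  rw [← div_eq_iff (hp x (mem_ball_zero_iff.2 hx))]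
  exact heq (mem_ball_zero_iff.2 hx)

end IsRIF2

/-- Let `φ = p̃/p` be a bidegree `(m,n)` RIF on `𝔻²` and suppose the
vertical line `{ζ ∈ 𝕋² : ζ₁ = τ}` is contained in `C_α(φ)`. Then `∂φ/∂z₁(τ, ·)` is a
nonzero constant on `𝔻`. -/
theorem line_partial_derivative_constant
    (m n : ℕ) (p pt : MvPolynomial (Fin 2) ℂ) (hRIF : IsRIF2 m n p pt)
    (α : ℂ) (hα : ‖α‖ = 1) (τ : ℂ) (hτ : ‖τ‖ = 1)
    (hline : vLine τ ⊆ levelSet2 p pt α) :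
    ∃ c₁ : ℂ, c₁ ≠ 0 ∧ ∀ z₂ : ℂ, ‖z₂‖ < 1 → dphi1 p pt (τ, z₂) = c₁ := by
  have hατ : conj α * τ ≠ 0 := mul_ne_zero
    (by rw [map_ne_zero]; exact norm_ne_zero_iff.1 (by rw [hα]; norm_num))
    (norm_ne_zero_iff.1 (by rw [hτ]; norm_num))
  have hslice := fun y (hy : y ∈ Metric.ball (0 : ℂ) 1) =>
    hRIF.slice_const_or_pos_conj_mul_dphi1 hα hτ hline (mem_ball_zero_iff.1 hy)
  have hu : AnalyticOnNhd ℂ (fun y => conj α * τ * dphi1 p pt (τ, y)) (Metric.ball 0 1) :=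
    fun y hy => analyticAt_const.mul
      (analyticAt_dphi1_snd (hRIF.ev_ne_zero_of_norm_eq_one hτ (mem_ball_zero_iff.1 hy)))
  -- `conj α * τ * ∂φ/∂z₁(τ, ·)` is real, hence constant
  obtain ⟨c, hc⟩ := hu.eq_const_of_im_eq_const (c₀ := 0)
    (fun y hy => (hslice y hy).elim (fun h => by simp [h.1]) fun h => (Complex.pos_iff.1 h).2.symm)
    Metric.isOpen_ball (Metric.isConnected_ball one_pos)
  refine ⟨c / (conj α * τ), div_ne_zero (fun hc0 => hRIF.reflection_ne_C_mul α ?_) hατ,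
    fun y hy => ?_⟩
  · refine eq_C_mul_of_ev_eq_on_bidisk fun x y hx hy => ?_
    have hy' := mem_ball_zero_iff.2 hy
    exact ((hslice y hy').resolve_right (by rw [hc y hy', hc0]; exact lt_irrefl 0)).2 x hx
  · rw [eq_div_iff hατ, mul_comm]
    exact hc y (mem_ball_zero_iff.2 hy)
end
end

section
/- Let φ = p̃/p be a bidegree (m,n) rational inner function on 𝔻² and let α ∈ 𝕋 be a generic parameter value for which the weight-vanishing theorem applies (all but finitely many α). Then each Clark weight W_j^α(ζ) = |∂φ/∂z₂(ζ, g_j^α(ζ))|^{-1}, j = 1,…,n, is a bounded function on 𝕋. -/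
open MeasureTheory Complex Filter Topology

noncomputable section

/-!
Fix `ζ ∈ 𝕋`. Since `p` has no zeros in `𝔻²` and no common factor with `p̃`, the slice
`p(ζ, ·)` is a nonzero polynomial all of whose roots `β` satisfy `|β| ≥ 1` (Hurwitz), and the
reflection formula turns `φ(ζ, ·)` into a finite Blaschke product
`b(z) = u · z^e · ∏_β (1 - β̄ z) / (z - β)` with `|u| = 1` and `e = n - #roots`.
For `|y| = 1` the logarithmic derivative gives `|∂φ/∂z₂(ζ, y)| = |b'(y)| = e + Σ_β P_β(y)` with
`P_β(y) = (|β|² - 1) / |y - β|²`, while telescoping over the factors gives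
`|b(y) - b(0)| ≤ 2 (e + Σ_β P_β(y))`. On the level set `b(y) = α`, so
`|∂φ/∂z₂(ζ, y)| ≥ |α - φ(ζ, 0)| / 2`.
Finally `φ(ζ, 0) ≠ α` for every `ζ ∈ 𝕋`: otherwise `|b(0)| = 1` forces `e = 0` and all `|β| = 1`,
so `b ≡ α` and the line `{ζ} × 𝕋` lies in `C_α(φ)`, contradicting genericity. By compactness
`|α - φ(ζ, 0)| ≥ ε > 0` on `𝕋`, and every Clark weight is bounded by `2 / ε`.
-/

theorem norm_mul_sub_mul_le {R : Type*} [SeminormedRing R] {a b c d : R} (ha : ‖a‖ ≤ 1)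
    (hd : ‖d‖ ≤ 1) :
    ‖a * b - c * d‖ ≤ ‖a - c‖ + ‖b - d‖ :=
  calc ‖a * b - c * d‖ = ‖a * (b - d) + (a - c) * d‖ := by noncomm_ring
    _ ≤ ‖a‖ * ‖b - d‖ + ‖a - c‖ * ‖d‖ :=
      (norm_add_le _ _).trans (add_le_add (norm_mul_le _ _) (norm_mul_le _ _))
    _ ≤ ‖b - d‖ + ‖a - c‖ := by
      gcongr
      · exact mul_le_of_le_one_left (norm_nonneg _) ha
      · exact mul_le_of_le_one_right (norm_nonneg _) hd
    _ = ‖a - c‖ + ‖b - d‖ := add_comm _ _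

section Telescoping

variable {ι R : Type*} [SeminormedCommRing R] [NormOneClass R]

theorem Multiset.norm_prod_map_le_one {s : Multiset ι} {f : ι → R}
    (hf : ∀ i ∈ s, ‖f i‖ ≤ 1) : ‖(s.map f).prod‖ ≤ 1 := by
  induction s using Multiset.induction_on with
  | empty => simp
  | cons a s ih =>
    rw [Multiset.forall_mem_cons] at hf
    rw [Multiset.map_cons, Multiset.prod_cons]
    exact (norm_mul_le _ _).trans (mul_le_one₀ hf.1 (norm_nonneg _) (ih hf.2))

theorem Multiset.norm_prod_map_sub_prod_map_le {s : Multiset ι} {f g : ι → R}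
    (hf : ∀ i ∈ s, ‖f i‖ ≤ 1) (hg : ∀ i ∈ s, ‖g i‖ ≤ 1) :
    ‖(s.map f).prod - (s.map g).prod‖ ≤ (s.map fun i => ‖f i - g i‖).sum := by
  induction s using Multiset.induction_on with
  | empty => simp
  | cons a s ih =>
    rw [Multiset.forall_mem_cons] at hf hg
    simp only [Multiset.map_cons, Multiset.prod_cons, Multiset.sum_cons]
    exact (norm_mul_sub_mul_le hf.1 (Multiset.norm_prod_map_le_one hg.2)).trans
      (add_le_add le_rfl (ih hf.2 hg.2))

end Telescoping

theorem norm_multiset_prod_map {ι K : Type*} [NormedField K] (s : Multiset ι) (f : ι → K) :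
    ‖(s.map f).prod‖ = (s.map fun i => ‖f i‖).prod := by
  simpa [Multiset.map_map] using map_multiset_prod (normHom : K →*₀ ℝ) (s.map f)

theorem Polynomial.wronskian_mul_mul {R : Type*} [CommRing R] (a b c d : Polynomial R) :
    wronskian (a * b) (c * d) = wronskian a c * (b * d) + a * c * wronskian b d := by
  simp only [wronskian, derivative_mul]
  ring

theorem MvPolynomial.X_zero_sub_C_dvd_of_eval_cons_eq_zero {K : Type*} [Field K] [Infinite K]
    {n : ℕ} {f : MvPolynomial (Fin (n + 1)) K} {τ : K}
    (h : ∀ x : Fin n → K, eval (Fin.cons τ x) f = 0) : X 0 - C τ ∣ f := by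
  have hroot : (finSuccEquiv K n f).IsRoot (C τ) := by
    refine MvPolynomial.funext fun x => ?_
    rw [map_zero, ← h x, eval_eq_eval_mv_eval', Polynomial.eval_map, ← Polynomial.eval₂_at_apply,
      eval_C]
  obtain ⟨c, hc⟩ := Polynomial.dvd_iff_isRoot.mpr hroot
  refine ⟨(finSuccEquiv K n).symm c, (finSuccEquiv K n).injective ?_⟩
  have hC : finSuccEquiv K n (C τ) = Polynomial.C (C τ) := by simp [finSuccEquiv_apply]
  rw [map_mul, map_sub, finSuccEquiv_X_zero, hC, AlgEquiv.apply_symm_apply, hc]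

theorem mem_closure_setOf_norm_eq_one_notMem {T : Set ℂ} (hT : T.Finite) {z : ℂ} (hz : ‖z‖ = 1) :
    z ∈ closure {w : ℂ | ‖w‖ = 1 ∧ w ∉ T} := by
  have : Nontrivial Circle := ⟨⟨1, -1, fun h => by
    have := congrArg ((↑) : Circle → ℂ) h
    norm_num at this⟩⟩
  set T' : Set Circle := {c | (c : ℂ) ∈ T}
  have hdense : Dense T'ᶜ := by
    rw [Set.compl_eq_univ_sdiff]
    exact dense_univ.sdiff_finite (hT.preimage Circle.coe_injective.injOn)
  have hc : (⟨z, mem_sphere_zero_iff_norm.mpr hz⟩ : Circle) ∈ closure T'ᶜ :=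
    hdense.closure_eq ▸ Set.mem_univ _
  exact map_mem_closure continuous_subtype_val hc fun w hw => ⟨Circle.norm_coe w, hw⟩

namespace ClarkWeight

open Polynomial ComplexConjugate

theorem one_sub_conj_mul_eq {y : ℂ} (hy : ‖y‖ = 1) (β : ℂ) :
    1 - conj β * y = y * conj (y - β) := by
  have : y * conj y = 1 := by rw [Complex.mul_conj, Complex.normSq_eq_norm_sq, hy]; simp
  rw [map_sub]
  linear_combination -this

theorem conj_inv_of_norm_eq_one {z : ℂ} (hz : ‖z‖ = 1) : (conj z)⁻¹ = z := by
  rw [← map_inv₀, Complex.inv_eq_conj hz, Complex.conj_conj]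

/-- For `‖β‖ > 1` this is a unimodular multiple of the Blaschke factor with zero `1 / conj β`;
for `‖β‖ = 1` it is the constant `-conj β` (away from `β`). -/
def blaschkeFactor (β z : ℂ) : ℂ := (1 - conj β * z) / (z - β)

theorem norm_blaschkeFactor {y β : ℂ} (hy : ‖y‖ = 1) (hyβ : y ≠ β) :
    ‖blaschkeFactor β y‖ = 1 := by
  rw [blaschkeFactor, one_sub_conj_mul_eq hy, norm_div, norm_mul, hy, one_mul, Complex.norm_conj,
    div_self (norm_ne_zero_iff.mpr (sub_ne_zero.mpr hyβ))]

theorem blaschkeFactor_zero (β : ℂ) : blaschkeFactor β 0 = -β⁻¹ := by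
  simp [blaschkeFactor, inv_neg]

theorem norm_blaschkeFactor_zero_le {β : ℂ} (hβ : 1 ≤ ‖β‖) : ‖blaschkeFactor β 0‖ ≤ 1 := by
  rw [blaschkeFactor_zero, norm_neg, norm_inv]
  exact inv_le_one_of_one_le₀ hβ

theorem blaschkeFactor_eq_of_norm_eq_one {β z : ℂ} (hβ : ‖β‖ = 1) (hz : z ≠ β) :
    blaschkeFactor β z = -conj β := by
  have : conj β * β = 1 := by rw [mul_comm, Complex.mul_conj, Complex.normSq_eq_norm_sq, hβ]; simp
  rw [blaschkeFactor, div_eq_iff (sub_ne_zero.mpr hz)]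
  linear_combination -this

theorem norm_blaschkeFactor_sub_le {y β : ℂ} (hy : ‖y‖ = 1) (hβ : 1 ≤ ‖β‖) (hyβ : y ≠ β) :
    ‖blaschkeFactor β y - blaschkeFactor β 0‖ ≤ 2 * ((‖β‖ ^ 2 - 1) / ‖y - β‖ ^ 2) := by
  have hβ0 : β ≠ 0 := norm_pos_iff.mp (one_pos.trans_le hβ)
  have hyβ' : y - β ≠ 0 := sub_ne_zero.mpr hyβ
  have hdiff : blaschkeFactor β y - blaschkeFactor β 0 = y * (1 - conj β * β) / (β * (y - β)) := by
    rw [blaschkeFactor_zero, blaschkeFactor]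
    field_simp
    ring
  have hnum : ‖1 - conj β * β‖ = ‖β‖ ^ 2 - 1 := by
    rw [mul_comm, Complex.mul_conj, Complex.normSq_eq_norm_sq, ← Complex.ofReal_one,
      ← Complex.ofReal_sub, Complex.norm_real, Real.norm_eq_abs, abs_sub_comm,
      abs_of_nonneg (by nlinarith)]
  have hyβ_le : ‖y - β‖ ≤ 2 * ‖β‖ := (norm_sub_le _ _).trans (by rw [hy]; linarith)
  rw [hdiff, norm_div, norm_mul, norm_mul, hy, one_mul, hnum]
  have hpos : 0 < ‖y - β‖ := norm_pos_iff.mpr hyβ'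
  rw [div_le_iff₀ (mul_pos (norm_pos_iff.mpr hβ0) hpos)]
  have : 0 ≤ ‖β‖ ^ 2 - 1 := by nlinarith
  calc ‖β‖ ^ 2 - 1 = 2 * ((‖β‖ ^ 2 - 1) / ‖y - β‖ ^ 2) * (‖y - β‖ * ‖y - β‖ / 2) := by
        field_simp
    _ ≤ 2 * ((‖β‖ ^ 2 - 1) / ‖y - β‖ ^ 2) * (‖β‖ * ‖y - β‖) := by
        gcongr
        nlinarith

theorem norm_prod_blaschkeFactor_zero_lt_one {s : Multiset ℂ} (hs : ∀ β ∈ s, 1 ≤ ‖β‖) {β : ℂ}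
    (hβ : β ∈ s) (hβ₁ : ‖β‖ ≠ 1) : ‖(s.map (blaschkeFactor · 0)).prod‖ < 1 := by
  obtain ⟨t, rfl⟩ := Multiset.exists_cons_of_mem hβ
  rw [Multiset.forall_mem_cons] at hs
  rw [Multiset.map_cons, Multiset.prod_cons, norm_mul]
  have hlt : ‖blaschkeFactor β 0‖ < 1 := by
    rw [blaschkeFactor_zero, norm_neg, norm_inv]
    exact inv_lt_one_of_one_lt₀ (lt_of_le_of_ne hs.1 (Ne.symm hβ₁))
  have hle : ‖(t.map (blaschkeFactor · 0)).prod‖ ≤ 1 :=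
    Multiset.norm_prod_map_le_one fun γ hγ => norm_blaschkeFactor_zero_le (hs.2 γ hγ)
  calc _ ≤ ‖blaschkeFactor β 0‖ * 1 := by gcongr
    _ < 1 := by rwa [mul_one]

def poissonSum (s : Multiset ℂ) (y : ℂ) : ℝ :=
  (s.map fun β => (‖β‖ ^ 2 - 1) / ‖y - β‖ ^ 2).sum

theorem poissonSum_nonneg {s : Multiset ℂ} (hs : ∀ β ∈ s, 1 ≤ ‖β‖) (y : ℂ) :
    0 ≤ poissonSum s y :=
  Multiset.sum_nonneg fun _ hx => by
    obtain ⟨β, hβ, rfl⟩ := Multiset.mem_map.mp hx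
    have := hs β hβ
    exact div_nonneg (by nlinarith) (by positivity)

theorem norm_blaschke_sub_blaschke_zero_le {y : ℂ} (hy : ‖y‖ = 1) {s : Multiset ℂ}
    (hs : ∀ β ∈ s, 1 ≤ ‖β‖ ∧ y ≠ β) (e : ℕ) :
    ‖y ^ e * (s.map (blaschkeFactor · y)).prod - 0 ^ e * (s.map (blaschkeFactor · 0)).prod‖
      ≤ 2 * (e + poissonSum s y) := by
  have hpow : ‖y ^ e - 0 ^ e‖ ≤ 2 * e := by
    cases e with
    | zero => simp
    | succ k => rw [zero_pow k.succ_ne_zero, sub_zero, norm_pow, hy, one_pow]; push_cast; linarith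
  have hprod : ‖(s.map (blaschkeFactor · y)).prod - (s.map (blaschkeFactor · 0)).prod‖
      ≤ 2 * poissonSum s y := by
    refine (Multiset.norm_prod_map_sub_prod_map_le
      (fun β hβ => (norm_blaschkeFactor hy (hs β hβ).2).le)
      (fun β hβ => norm_blaschkeFactor_zero_le (hs β hβ).1)).trans ?_
    rw [poissonSum, ← Multiset.sum_map_mul_left]
    exact Multiset.sum_map_le_sum_map _ _ fun β hβ =>
      norm_blaschkeFactor_sub_le hy (hs β hβ).1 (hs β hβ).2
  calc _ ≤ ‖y ^ e - 0 ^ e‖ + ‖(s.map (blaschkeFactor · y)).prod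
          - (s.map (blaschkeFactor · 0)).prod‖ :=
        norm_mul_sub_mul_le (by rw [norm_pow, hy, one_pow])
          (Multiset.norm_prod_map_le_one fun β hβ => norm_blaschkeFactor_zero_le (hs β hβ).1)
    _ ≤ 2 * (e + poissonSum s y) := by linarith

def rootProd (s : Multiset ℂ) : ℂ[X] := (s.map fun β => X - C β).prod

def reflectedRootProd (s : Multiset ℂ) : ℂ[X] := (s.map fun β => 1 - C (conj β) * X).prod

theorem eval_rootProd (s : Multiset ℂ) (z : ℂ) :
    (rootProd s).eval z = (s.map fun β => z - β).prod := by
  simp [rootProd, eval_multiset_prod]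

theorem eval_reflectedRootProd (s : Multiset ℂ) (z : ℂ) :
    (reflectedRootProd s).eval z = (s.map fun β => 1 - conj β * z).prod := by
  simp [reflectedRootProd, eval_multiset_prod]

theorem eval_rootProd_ne_zero_iff {s : Multiset ℂ} {z : ℂ} :
    (rootProd s).eval z ≠ 0 ↔ ∀ β ∈ s, z ≠ β := by
  simp only [eval_rootProd, ne_eq, Multiset.prod_eq_zero_iff, Multiset.mem_map, sub_eq_zero,
    not_exists, not_and]

theorem eval_div_eval_eq_blaschke {z : ℂ} {s : Multiset ℂ} (hs : ∀ β ∈ s, z ≠ β) {L : ℂ}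
    (hL : L ≠ 0) (c : ℂ) (e : ℕ) :
    (C c * X ^ e * reflectedRootProd s).eval z / (C L * rootProd s).eval z
      = c / L * (z ^ e * (s.map (blaschkeFactor · z)).prod) := by
  have hprod := eval_rootProd_ne_zero_iff.mpr hs
  rw [eval_rootProd] at hprod
  simp only [eval_mul, eval_C, eval_pow, eval_X, eval_rootProd, eval_reflectedRootProd,
    blaschkeFactor, Multiset.prod_map_div]
  field_simp
  simp only [mul_comm z]

theorem wronskian_X_sub_C_one_sub_C_conj_mul_X (β : ℂ) :
    wronskian (X - C β) (1 - C (conj β) * X) = C ((‖β‖ : ℂ) ^ 2 - 1) := by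
  simp only [wronskian, derivative_X, derivative_C, derivative_one,
    derivative_C_mul_X, ← Complex.conj_mul', map_sub, map_one, C_mul]
  ring

theorem eval_wronskian_rootProd {y : ℂ} (hy : ‖y‖ = 1) {s : Multiset ℂ} (hs : ∀ β ∈ s, y ≠ β) :
    y * (wronskian (rootProd s) (reflectedRootProd s)).eval y
      = (rootProd s).eval y * (reflectedRootProd s).eval y * poissonSum s y := by
  induction s using Multiset.induction_on with
  | empty => simp [rootProd, reflectedRootProd, poissonSum, wronskian]
  | cons β s ih =>
    rw [Multiset.forall_mem_cons] at hs
    have hyβ : (‖y - β‖ : ℂ) ≠ 0 := by simpa [sub_eq_zero] using hs.1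
    have hfactor : (y - β) * (1 - conj β * y) = y * (‖y - β‖ : ℂ) ^ 2 := by
      rw [one_sub_conj_mul_eq hy, ← Complex.mul_conj']
      ring
    have hroot : rootProd (β ::ₘ s) = (X - C β) * rootProd s := by simp [rootProd]
    have hrefl : reflectedRootProd (β ::ₘ s) = (1 - C (conj β) * X) * reflectedRootProd s := by
      simp [reflectedRootProd]
    have hpoisson : poissonSum (β ::ₘ s) y = (‖β‖ ^ 2 - 1) / ‖y - β‖ ^ 2 + poissonSum s y := by
      simp [poissonSum]
    rw [hroot, hrefl, hpoisson, wronskian_mul_mul, wronskian_X_sub_C_one_sub_C_conj_mul_X]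
    have hcancel : (‖y - β‖ : ℂ) ^ 2 * ((‖β‖ ^ 2 - 1) / ‖y - β‖ ^ 2) = ‖β‖ ^ 2 - 1 :=
      mul_div_cancel₀ _ (pow_ne_zero 2 hyβ)
    simp only [eval_add, eval_mul, eval_C, eval_sub, eval_X, eval_one]
    push_cast
    set P := (rootProd s).eval y
    set R := (reflectedRootProd s).eval y
    linear_combination (y - β) * (1 - conj β * y) * ih hs.2
      - P * R * ((‖β‖ ^ 2 - 1) / ‖y - β‖ ^ 2) * hfactor - y * P * R * hcancel

theorem eval_wronskian_C_mul_rootProd {y : ℂ} (hy : ‖y‖ = 1) {s : Multiset ℂ}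
    (hs : ∀ β ∈ s, y ≠ β) (L c : ℂ) (e : ℕ) :
    y * (wronskian (C L * rootProd s) (C c * X ^ e * reflectedRootProd s)).eval y
      = (C L * rootProd s).eval y * (C c * X ^ e * reflectedRootProd s).eval y
        * (e + poissonSum s y) := by
  have h := eval_wronskian_rootProd hy hs
  simp only [wronskian, derivative_mul, derivative_C, derivative_X_pow, eval_sub, eval_mul,
    eval_add, eval_C, eval_pow, eval_X, zero_mul, zero_add] at h ⊢
  cases e with
  | zero => linear_combination L * c * h
  | succ k =>
    push_cast
    linear_combination L * c * y ^ (k + 1) * h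

theorem norm_eval_mul_pow_le {f : ℂ[X]} {n : ℕ} (hdeg : f.natDegree ≤ n)
    (hroots : ∀ β ∈ f.roots, 1 ≤ ‖β‖) {a b : ℂ} (ha : ‖a‖ < 1) (hb : ‖b‖ ≤ 1) :
    ‖f.eval b‖ * ((1 - ‖a‖) / 2) ^ n ≤ ‖f.eval a‖ := by
  set c := (1 - ‖a‖) / 2 with hc
  have hc₀ : 0 ≤ c := by linarith [norm_nonneg a]
  have hc₁ : c ≤ 1 := by linarith [norm_nonneg a]
  have hfactor : ∀ β ∈ f.roots, c * ‖b - β‖ ≤ ‖a - β‖ := fun β hβ => by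
    have h₁ : ‖b - β‖ ≤ 1 + ‖β‖ := (norm_sub_le _ _).trans (by linarith)
    have h₂ : ‖β‖ - ‖a‖ ≤ ‖a - β‖ := by simpa [norm_sub_rev] using norm_sub_norm_le β a
    nlinarith [hroots β hβ, norm_nonneg a, norm_nonneg (b - β)]
  have hsplit := IsAlgClosed.splits f
  have hcard : f.roots.card ≤ n := hsplit.natDegree_eq_card_roots ▸ hdeg
  simp only [hsplit.eval_eq_prod_roots, norm_mul, norm_multiset_prod_map, mul_assoc]
  refine mul_le_mul_of_nonneg_left ?_ (norm_nonneg _)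
  calc (f.roots.map fun β => ‖b - β‖).prod * c ^ n
      ≤ (f.roots.map fun β => ‖b - β‖).prod * c ^ f.roots.card := by
        refine mul_le_mul_of_nonneg_left (pow_le_pow_of_le_one hc₀ hc₁ hcard) ?_
        exact Multiset.prod_nonneg fun x hx => by
          obtain ⟨β, -, rfl⟩ := Multiset.mem_map.mp hx
          exact norm_nonneg _
    _ = (f.roots.map fun β => c * ‖b - β‖).prod := by
        rw [Multiset.prod_map_mul, Multiset.map_const', Multiset.prod_replicate, mul_comm]
    _ ≤ (f.roots.map fun β => ‖a - β‖).prod :=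
        Multiset.prod_map_le_prod_map₀ _ _ (fun _ _ => by positivity) hfactor

def slice (p : MvPolynomial (Fin 2) ℂ) (τ : ℂ) : ℂ[X] :=
  MvPolynomial.aeval ![C τ, X] p

theorem eval_slice (p : MvPolynomial (Fin 2) ℂ) (τ z : ℂ) :
    (slice p τ).eval z = ev p (τ, z) := by
  induction p using MvPolynomial.induction_on with
  | C a => simp [slice, ev]
  | add q r hq hr => simp_all [slice, ev]
  | mul_X q i hq =>
    simp only [slice, ev, map_mul, eval_mul, MvPolynomial.aeval_X, MvPolynomial.eval_X] at hq ⊢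
    rw [hq]
    fin_cases i <;> simp

theorem derivative_slice (p : MvPolynomial (Fin 2) ℂ) (τ : ℂ) :
    derivative (slice p τ) = slice (MvPolynomial.pderiv 1 p) τ := by
  induction p using MvPolynomial.induction_on with
  | C a => simp [slice]
  | add q r hq hr => simp_all [slice]
  | mul_X q i hq =>
    simp only [slice, map_mul, derivative_mul, Derivation.leibniz, smul_eq_mul, map_add] at hq ⊢
    rw [hq]
    fin_cases i <;> simp [MvPolynomial.pderiv_X] <;> ring

theorem natDegree_slice_le (p : MvPolynomial (Fin 2) ℂ) (τ : ℂ) :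
    (slice p τ).natDegree ≤ MvPolynomial.degreeOf 1 p := by
  conv_lhs => rw [slice, p.as_sum, map_sum]
  refine natDegree_sum_le_of_forall_le _ _ fun d hd => ?_
  rw [MvPolynomial.aeval_monomial, Finsupp.prod_fintype _ _ (by simp), Fin.prod_univ_two]
  simp only [Matrix.cons_val_zero, Matrix.cons_val_one, ← C_pow, Polynomial.algebraMap_apply,
    Algebra.algebraMap_self, RingHom.id_apply, ← mul_assoc, ← C_mul]
  exact (natDegree_C_mul_le _ _).trans ((natDegree_X_pow_le _).trans
    (MvPolynomial.monomial_le_degreeOf 1 hd))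

theorem continuous_ev (p : MvPolynomial (Fin 2) ℂ) : Continuous (ev p) :=
  (MvPolynomial.continuous_eval p).comp (by fun_prop)

theorem dphi2_eq_eval_wronskian (p pt : MvPolynomial (Fin 2) ℂ) (τ y : ℂ) :
    dphi2 p pt (τ, y) = (wronskian (slice p τ) (slice pt τ)).eval y / (slice p τ).eval y ^ 2 := by
  simp only [dphi2, wronskian, eval_sub, eval_mul, derivative_slice, eval_slice]
  ring

theorem tendsto_ev_radial_fst (p : MvPolynomial (Fin 2) ℂ) (τ z : ℂ) :
    Tendsto (fun r : ℝ => ev p (r * τ, z)) (𝓝[<] 1) (𝓝 (ev p (τ, z))) := by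
  have h : Tendsto (fun r : ℝ => ((r : ℂ) * τ, z)) (𝓝 1) (𝓝 (τ, z)) := by
    simpa using (by fun_prop : Continuous fun r : ℝ => ((r : ℂ) * τ, z)).tendsto 1
  exact (continuous_ev p).continuousAt.tendsto.comp (h.mono_left nhdsWithin_le_nhds)

theorem X_zero_sub_C_dvd_of_slice_eq_zero {q : MvPolynomial (Fin 2) ℂ} {τ : ℂ}
    (hq : slice q τ = 0) : MvPolynomial.X 0 - MvPolynomial.C τ ∣ q :=
  MvPolynomial.X_zero_sub_C_dvd_of_eval_cons_eq_zero fun x => by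
    have : Fin.cons τ x = ![τ, x 0] := by ext i; fin_cases i <;> rfl
    rw [this]
    change ev q (τ, x 0) = 0
    rw [← eval_slice, hq, eval_zero]

theorem ev_reflection_of_norm_eq_one {m n : ℕ} {p pt : MvPolynomial (Fin 2) ℂ}
    (href : IsReflection2 m n p pt) {τ z : ℂ} (hτ : ‖τ‖ = 1) (hz : z ≠ 0) :
    ev pt (τ, z) = τ ^ m * z ^ n * conj (ev p (τ, (conj z)⁻¹)) := by
  rw [href (τ, z) (norm_ne_zero_iff.mp (by rw [hτ]; exact one_ne_zero)) hz,
    conj_inv_of_norm_eq_one hτ]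

theorem norm_ev_reflection_eq {m n : ℕ} {p pt : MvPolynomial (Fin 2) ℂ}
    (href : IsReflection2 m n p pt) {z : ℂ × ℂ} (hz : z ∈ torus2) : ‖ev pt z‖ = ‖ev p z‖ := by
  obtain ⟨hz₁, hz₂⟩ := hz
  rw [ev_reflection_of_norm_eq_one href hz₁ (norm_ne_zero_iff.mp (by rw [hz₂]; exact one_ne_zero)),
    conj_inv_of_norm_eq_one hz₂, norm_mul, norm_mul, norm_pow, norm_pow, hz₁, hz₂,
    Complex.norm_conj]
  simp

theorem slice_ne_zero {m n : ℕ} {p pt : MvPolynomial (Fin 2) ℂ} (hRIF : IsRIF2 m n p pt)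
    {τ : ℂ} (hτ : ‖τ‖ = 1) : slice p τ ≠ 0 := by
  intro hp
  have hpt : slice pt τ = 0 := by
    refine eq_zero_of_infinite_isRoot _
      ((Set.finite_singleton 0).infinite_compl.mono fun z hz => ?_)
    change (slice pt τ).eval z = 0
    rw [eval_slice, ev_reflection_of_norm_eq_one hRIF.reflection hτ hz, ← eval_slice, hp]
    simp
  have hunit := hRIF.coprime _ (X_zero_sub_C_dvd_of_slice_eq_zero hp)
    (X_zero_sub_C_dvd_of_slice_eq_zero hpt)
  simpa using hunit.map (MvPolynomial.eval ![τ, 0])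

/-- Hurwitz: the roots of `p(rτ, ·)`, `r < 1`, lie outside the open disk by stability, and the
estimate `norm_eval_mul_pow_le`, uniform in `r`, survives the limit `r → 1`. -/
theorem one_le_norm_of_mem_roots_slice {p : MvPolynomial (Fin 2) ℂ}
    (hstable : ∀ z ∈ bidisk, ev p z ≠ 0) {τ : ℂ} (hτ : ‖τ‖ = 1) (hp : slice p τ ≠ 0)
    {β : ℂ} (hβ : β ∈ (slice p τ).roots) : 1 ≤ ‖β‖ := by
  by_contra! hβ₁
  set c := (1 - ‖β‖) / 2 with hc
  have hc₀ : 0 < c := by linarith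
  have hinterior : ∀ r ∈ Set.Ioo (0 : ℝ) 1, ∀ b : ℂ, ‖b‖ ≤ 1 →
      ‖ev p (r * τ, b)‖ * c ^ MvPolynomial.degreeOf 1 p ≤ ‖ev p (r * τ, β)‖ := by
    intro r hr b hb
    have hrτ : ‖(r : ℂ) * τ‖ < 1 := by
      rw [norm_mul, hτ, mul_one, Complex.norm_real, Real.norm_of_nonneg hr.1.le]
      exact hr.2
    have hroots : ∀ γ ∈ (slice p (r * τ)).roots, 1 ≤ ‖γ‖ := fun γ hγ => by
      by_contra! hγ₁
      exact hstable _ ⟨hrτ, hγ₁⟩ (by rw [← eval_slice]; exact (mem_roots'.mp hγ).2)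
    simpa only [eval_slice] using
      norm_eval_mul_pow_le (natDegree_slice_le p _) hroots hβ₁ hb
  have hroot : ∀ b ∈ Metric.closedBall (0 : ℂ) 1, (slice p τ).IsRoot b := by
    intro b hb
    have hlim : ‖ev p (τ, b)‖ * c ^ MvPolynomial.degreeOf 1 p ≤ ‖ev p (τ, β)‖ :=
      le_of_tendsto_of_tendsto ((tendsto_ev_radial_fst p τ b).norm.mul_const _)
        (tendsto_ev_radial_fst p τ β).norm
        (Filter.mem_of_superset (Ioo_mem_nhdsLT one_pos) fun r hr =>
          hinterior r hr b (mem_closedBall_zero_iff.mp hb))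
    rw [← eval_slice p τ β, (mem_roots'.mp hβ).2, norm_zero] at hlim
    have : ‖ev p (τ, b)‖ = 0 :=
      le_antisymm (nonpos_of_mul_nonpos_left hlim (pow_pos hc₀ _)) (norm_nonneg _)
    rw [IsRoot.def, eval_slice, ← norm_eq_zero, this]
  exact hp (eq_zero_of_infinite_isRoot _
    ((infinite_of_mem_nhds 0 (Metric.closedBall_mem_nhds 0 one_pos)).mono hroot))

structure SliceFactorization (m n : ℕ) (p pt : MvPolynomial (Fin 2) ℂ) (τ : ℂ) where
  L : ℂ
  roots : Multiset ℂ
  L_ne_zero : L ≠ 0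
  one_le_norm : ∀ β ∈ roots, 1 ≤ ‖β‖
  slice_eq : slice p τ = C L * rootProd roots
  slice_reflection_eq :
    slice pt τ = C (τ ^ m * conj L) * X ^ (n - roots.card) * reflectedRootProd roots

theorem nonempty_sliceFactorization {m n : ℕ} {p pt : MvPolynomial (Fin 2) ℂ}
    (hRIF : IsRIF2 m n p pt) {τ : ℂ} (hτ : ‖τ‖ = 1) : Nonempty (SliceFactorization m n p pt τ) := by
  have hp := slice_ne_zero hRIF hτ
  have hsplit := IsAlgClosed.splits (slice p τ)
  set L := (slice p τ).leadingCoeff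
  set s := (slice p τ).roots
  have hcard : s.card ≤ n :=
    hsplit.natDegree_eq_card_roots ▸ (natDegree_slice_le p τ).trans hRIF.deg2.le
  have hfac : slice p τ = C L * rootProd s := hsplit.eq_prod_roots
  refine ⟨⟨L, s, leadingCoeff_ne_zero.mpr hp,
    fun β hβ => one_le_norm_of_mem_roots_slice hRIF.stable hτ hp hβ, hfac, ?_⟩⟩
  refine eq_of_infinite_eval_eq _ _ ((Set.finite_singleton 0).infinite_compl.mono fun z hz => ?_)
  have hz : z ≠ 0 := hz
  have hpow : z ^ n = z ^ (n - s.card) * z ^ s.card := by rw [← pow_add, Nat.sub_add_cancel hcard]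
  change (slice pt τ).eval z = _
  rw [eval_slice, ev_reflection_of_norm_eq_one hRIF.reflection hτ hz, ← eval_slice, hfac]
  simp only [eval_mul, eval_C, eval_pow, eval_X, eval_rootProd, eval_reflectedRootProd, map_mul,
    map_multiset_prod, Multiset.map_map, Function.comp_def, map_sub, map_inv₀, Complex.conj_conj,
    hpow]
  rw [show (s.map fun β => 1 - conj β * z) = s.map fun β => z * (z⁻¹ - conj β) from
      Multiset.map_congr rfl fun β _ => by field_simp,
    Multiset.prod_map_mul, Multiset.map_const', Multiset.prod_replicate]
  ring

namespace SliceFactorization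

variable {m n : ℕ} {p pt : MvPolynomial (Fin 2) ℂ} {τ : ℂ} (F : SliceFactorization m n p pt τ)

theorem ev_ne_zero_iff {z : ℂ} : ev p (τ, z) ≠ 0 ↔ ∀ β ∈ F.roots, z ≠ β := by
  rw [← eval_slice, F.slice_eq, eval_mul, eval_C, mul_ne_zero_iff, eval_rootProd_ne_zero_iff]
  exact and_iff_right F.L_ne_zero

theorem zero_ne_root : ∀ β ∈ F.roots, (0 : ℂ) ≠ β := fun β hβ h => by
  have := F.one_le_norm β hβ
  rw [← h, norm_zero] at this
  exact zero_lt_one.not_ge this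

theorem norm_constant_eq_one (hτ : ‖τ‖ = 1) : ‖τ ^ m * conj F.L / F.L‖ = 1 := by
  rw [norm_div, norm_mul, norm_pow, hτ, one_pow, one_mul, Complex.norm_conj,
    div_self (norm_ne_zero_iff.mpr F.L_ne_zero)]

theorem rif_eq {z : ℂ} (hz : ∀ β ∈ F.roots, z ≠ β) :
    rif p pt (τ, z) = τ ^ m * conj F.L / F.L
      * (z ^ (n - F.roots.card) * (F.roots.map (blaschkeFactor · z)).prod) := by
  rw [rif, ← eval_slice, ← eval_slice, F.slice_eq, F.slice_reflection_eq]
  exact eval_div_eval_eq_blaschke hz F.L_ne_zero _ _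

theorem norm_dphi2_eq (href : IsReflection2 m n p pt) (hτ : ‖τ‖ = 1) {y : ℂ} (hy : ‖y‖ = 1)
    (hpy : ev p (τ, y) ≠ 0) :
    ‖dphi2 p pt (τ, y)‖ = (n - F.roots.card : ℕ) + poissonSum F.roots y := by
  have hW := eval_wronskian_C_mul_rootProd hy ((F.ev_ne_zero_iff).mp hpy) F.L (τ ^ m * conj F.L)
    (n - F.roots.card)
  rw [← F.slice_eq, ← F.slice_reflection_eq, eval_slice, eval_slice] at hW
  have hU : 0 ≤ ((n - F.roots.card : ℕ) : ℝ) + poissonSum F.roots y :=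
    add_nonneg (Nat.cast_nonneg _) (poissonSum_nonneg F.one_le_norm y)
  have hnorm : ‖(wronskian (slice p τ) (slice pt τ)).eval y‖ = ‖ev p (τ, y)‖ ^ 2
      * (((n - F.roots.card : ℕ) : ℝ) + poissonSum F.roots y) := by
    rw [← one_mul ‖_‖, ← hy, ← norm_mul, hW, norm_mul, norm_mul,
      norm_ev_reflection_eq href ⟨hτ, hy⟩, ← Complex.ofReal_natCast, ← Complex.ofReal_add,
      Complex.norm_real, Real.norm_of_nonneg hU, sq]
  rw [dphi2_eq_eval_wronskian, norm_div, hnorm, norm_pow, eval_slice]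
  field_simp

end SliceFactorization

section LevelSet

variable {p pt : MvPolynomial (Fin 2) ℂ} {α : ℂ}

theorem continuousAt_rif {ζ : ℂ × ℂ} (hp : ev p ζ ≠ 0) : ContinuousAt (rif p pt) ζ :=
  (continuous_ev pt).continuousAt.div (continuous_ev p).continuousAt hp

theorem tendsto_rif_radial {ζ : ℂ × ℂ} (hp : ev p ζ ≠ 0) :
    Tendsto (fun r : ℝ => rif p pt (r * ζ.1, r * ζ.2)) (𝓝[<] 1) (𝓝 (rif p pt ζ)) := by
  have h : Tendsto (fun r : ℝ => ((r : ℂ) * ζ.1, (r : ℂ) * ζ.2)) (𝓝 1) (𝓝 ζ) := by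
    simpa using (by fun_prop : Continuous fun r : ℝ => ((r : ℂ) * ζ.1, (r : ℂ) * ζ.2)).tendsto 1
  exact (continuousAt_rif hp).tendsto.comp (h.mono_left nhdsWithin_le_nhds)

theorem rif_eq_of_mem_levelSet2 {ζ : ℂ × ℂ} (hζ : ζ ∈ levelSet2 p pt α) (hp : ev p ζ ≠ 0) :
    rif p pt ζ = α := by
  have hU : IsOpen {z | ev p z ≠ 0} := isOpen_ne_fun (continuous_ev p) continuous_const
  have hmaps : rif p pt '' ({z | ev p z ≠ 0} ∩ {ζ | ζ ∈ torus2 ∧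
      Tendsto (fun r : ℝ => rif p pt (r * ζ.1, r * ζ.2)) (𝓝[<] 1) (𝓝 α)}) ⊆ {α} := by
    rintro _ ⟨z, ⟨hz, -, hlim⟩, rfl⟩
    exact tendsto_nhds_unique (tendsto_rif_radial hz) hlim
  simpa using closure_mono hmaps
    ((continuousAt_rif hp).continuousWithinAt.mem_closure_image (hU.inter_closure ⟨hp, hζ⟩))

theorem mem_levelSet2_of_rif_eq {ζ : ℂ × ℂ} (hζ : ζ ∈ torus2) (hp : ev p ζ ≠ 0)
    (h : rif p pt ζ = α) : ζ ∈ levelSet2 p pt α :=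
  subset_closure ⟨hζ, h ▸ tendsto_rif_radial hp⟩

theorem isExceptional_of_rif_eq {τ : ℂ} (hτ : ‖τ‖ = 1) {T : Set ℂ} (hT : T.Finite)
    (h : ∀ z : ℂ, ‖z‖ = 1 → z ∉ T → ev p (τ, z) ≠ 0 ∧ rif p pt (τ, z) = α) :
    IsExceptional p pt α := by
  refine ⟨τ, hτ, Or.inl ?_⟩
  rintro ⟨_, z⟩ ⟨rfl, hz⟩
  exact isClosed_closure.closure_subset <|
    map_mem_closure (by fun_prop) (mem_closure_setOf_norm_eq_one_notMem hT hz) fun w ⟨hw, hwT⟩ =>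
      mem_levelSet2_of_rif_eq ⟨hτ, hw⟩ (h w hw hwT).1 (h w hw hwT).2

end LevelSet

variable {m n : ℕ} {p pt : MvPolynomial (Fin 2) ℂ} {α : ℂ}

theorem rif_zero_ne (hRIF : IsRIF2 m n p pt) (hα : ‖α‖ = 1) (hgen : IsGenericValue p pt α)
    {τ : ℂ} (hτ : ‖τ‖ = 1) : rif p pt (τ, 0) ≠ α := by
  obtain ⟨F⟩ := nonempty_sliceFactorization hRIF hτ
  intro hval
  by_cases hunimodular : n - F.roots.card = 0 ∧ ∀ β ∈ F.roots, ‖β‖ = 1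
  · refine hgen (isExceptional_of_rif_eq hτ F.roots.finite_toSet fun z _ hz => ?_)
    have hz' : ∀ β ∈ F.roots, z ≠ β := fun β hβ h => hz (h ▸ hβ)
    refine ⟨F.ev_ne_zero_iff.mpr hz', ?_⟩
    rw [← hval, F.rif_eq hz', F.rif_eq F.zero_ne_root, hunimodular.1, pow_zero, pow_zero]
    refine congrArg (fun P => _ * (1 * P)) (congrArg Multiset.prod
      (Multiset.map_congr rfl fun β hβ => ?_))
    rw [blaschkeFactor_eq_of_norm_eq_one (hunimodular.2 β hβ) (hz' β hβ),
      blaschkeFactor_eq_of_norm_eq_one (hunimodular.2 β hβ) (F.zero_ne_root β hβ)]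
  · have hlt : ‖rif p pt (τ, 0)‖ < 1 := by
      rw [F.rif_eq F.zero_ne_root, norm_mul, F.norm_constant_eq_one hτ, one_mul]
      rcases not_and_or.mp hunimodular with he | hβ
      · rw [zero_pow he, zero_mul, norm_zero]
        exact one_pos
      · simp only [not_forall] at hβ
        obtain ⟨β, hβ, hβ₁⟩ := hβ
        rw [norm_mul]
        calc _ ≤ 1 * ‖(F.roots.map (blaschkeFactor · 0)).prod‖ := by
              gcongr
              rw [norm_pow, norm_zero]
              exact pow_le_one₀ le_rfl zero_le_one
          _ < 1 := by
              rw [one_mul]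
              exact norm_prod_blaschkeFactor_zero_lt_one F.one_le_norm hβ hβ₁
    rw [hval, hα] at hlt
    exact lt_irrefl _ hlt

theorem exists_pos_forall_le_norm_sub_rif_zero (hRIF : IsRIF2 m n p pt) (hα : ‖α‖ = 1)
    (hgen : IsGenericValue p pt α) :
    ∃ ε > 0, ∀ τ : ℂ, ‖τ‖ = 1 → ε ≤ ‖α - rif p pt (τ, 0)‖ := by
  have hp : ∀ τ ∈ Metric.sphere (0 : ℂ) 1, ev p (τ, 0) ≠ 0 := fun τ hτ =>
    have F := (nonempty_sliceFactorization hRIF (mem_sphere_zero_iff_norm.mp hτ)).some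
    F.ev_ne_zero_iff.mpr F.zero_ne_root
  have hcont : ContinuousOn (fun τ : ℂ => ‖α - rif p pt (τ, 0)‖) (Metric.sphere 0 1) :=
    fun τ hτ => ContinuousAt.continuousWithinAt <| continuousAt_const.sub
      ((continuousAt_rif (pt := pt) (hp τ hτ)).comp (f := fun τ : ℂ => (τ, (0 : ℂ))) (by fun_prop))
      |>.norm
  obtain ⟨τ₀, hτ₀, hmin⟩ :=
    (isCompact_sphere 0 1).exists_isMinOn (NormedSpace.sphere_nonempty.mpr zero_le_one) hcont
  exact ⟨_, norm_pos_iff.mpr (sub_ne_zero.mpr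
    (rif_zero_ne hRIF hα hgen (mem_sphere_zero_iff_norm.mp hτ₀)).symm),
    fun τ hτ => hmin (mem_sphere_zero_iff_norm.mpr hτ)⟩

theorem norm_rif_sub_rif_zero_le (hRIF : IsRIF2 m n p pt) {ζ y : ℂ} (hζ : ‖ζ‖ = 1)
    (hy : ‖y‖ = 1) (hpy : ev p (ζ, y) ≠ 0) :
    ‖rif p pt (ζ, y) - rif p pt (ζ, 0)‖ ≤ 2 * ‖dphi2 p pt (ζ, y)‖ := by
  obtain ⟨F⟩ := nonempty_sliceFactorization hRIF hζ
  have hys := F.ev_ne_zero_iff.mp hpy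
  rw [F.norm_dphi2_eq hRIF.reflection hζ hy hpy, F.rif_eq hys, F.rif_eq F.zero_ne_root, ← mul_sub,
    norm_mul, F.norm_constant_eq_one hζ, one_mul]
  exact norm_blaschke_sub_blaschke_zero_le hy (fun β hβ => ⟨F.one_le_norm β hβ, hys β hβ⟩) _

end ClarkWeight

theorem clark_weight_bounded_general
    (m n : ℕ) (p pt : MvPolynomial (Fin 2) ℂ) (hRIF : IsRIF2 m n p pt)
    (α : ℂ) (hα : ‖α‖ = 1) (hgen : IsGenericValue p pt α)
    (g : Fin n → ℂ → ℂ) (hg : IsGraphFamily n g)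
    (hparam : levelSet2 p pt α = graphUnion n g) :
    ∀ j : Fin n, ∃ M : ℝ, ∀ ζ : ℂ, ‖ζ‖ = 1 →
      ‖dphi2 p pt (ζ, g j ζ)‖⁻¹ ≤ M := by
  obtain ⟨ε, hε, hεle⟩ := ClarkWeight.exists_pos_forall_le_norm_sub_rif_zero hRIF hα hgen
  intro j
  refine ⟨2 / ε, fun ζ hζ => ?_⟩
  by_cases hpy : ev p (ζ, g j ζ) = 0
  · -- at a zero of `p`, `dphi2` is the junk value `_ / 0 = 0`, and so is the weight
    rw [dphi2, hpy, zero_pow two_ne_zero, div_zero, norm_zero, inv_zero]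
    positivity
  have hval : rif p pt (ζ, g j ζ) = α := ClarkWeight.rif_eq_of_mem_levelSet2
    (hparam ▸ Set.mem_iUnion.mpr ⟨j, hζ, rfl⟩) hpy
  have hbound : ε / 2 ≤ ‖dphi2 p pt (ζ, g j ζ)‖ := by
    have := ClarkWeight.norm_rif_sub_rif_zero_le hRIF hζ (hg.1 j ζ hζ) hpy
    rw [hval] at this
    linarith [hεle ζ hζ]
  calc ‖dphi2 p pt (ζ, g j ζ)‖⁻¹ ≤ (ε / 2)⁻¹ := inv_anti₀ (by positivity) hbound
    _ = 2 / ε := inv_div _ _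

/-- Let `φ = p̃/p` be a bidegree `(m,n)` RIF on `𝔻²` and let `α ∈ 𝕋`
be a generic value for which the weight-vanishing theorem applies (i.e. at every
singularity `(τ,γ)` of `φ` through which a branch `ζ₂ = g_j^α(ζ₁)` passes, the weight
`W_j^α` is comparable to `|ζ − τ|^{K_j}` near `τ` for an even positive integer `K_j`).
Then each Clark weight `W_j^α(ζ) = |∂φ/∂z₂(ζ, g_j^α(ζ))|⁻¹` is bounded on `𝕋`. -/
theorem clark_weight_bounded
    (m n : ℕ) (p pt : MvPolynomial (Fin 2) ℂ) (hRIF : IsRIF2 m n p pt)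
    (α : ℂ) (hα : ‖α‖ = 1) (hgen : IsGenericValue p pt α)
    (g : Fin n → ℂ → ℂ) (hg : IsGraphFamily n g)
    (hparam : levelSet2 p pt α = graphUnion n g)
    (hWV : ∀ τ γ : ℂ, (τ, γ) ∈ torus2 → ev p (τ, γ) = 0 → ev pt (τ, γ) = 0 →
      ∀ j : Fin n, g j τ = γ →
        ∃ K : ℕ, 0 < K ∧ Even K ∧
          ∃ c C : ℝ, 0 < c ∧ c ≤ C ∧
            ∃ δ : ℝ, 0 < δ ∧
              ∀ ζ : ℂ, ‖ζ‖ = 1 → ζ ≠ τ → ‖ζ - τ‖ < δ →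
                c ≤ ‖dphi2 p pt (ζ, g j ζ)‖⁻¹ / ‖ζ - τ‖ ^ K ∧
                ‖dphi2 p pt (ζ, g j ζ)‖⁻¹ / ‖ζ - τ‖ ^ K ≤ C) :
    ∀ j : Fin n, ∃ M : ℝ, ∀ ζ : ℂ, ‖ζ‖ = 1 →
      ‖dphi2 p pt (ζ, g j ζ)‖⁻¹ ≤ M :=
  clark_weight_bounded_general m n p pt hRIF α hα hgen g hg hparam
end
end
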